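/- arXiv:2202.01378 — 5 statements merged into one kernel-verified Lean document; each statement's English description precedes it below -/
import Mathlib

section
/- Let 𝒞 be a root class of groups consisting only of periodic groups, and let X be an abelian group. If X has the property 𝒞-Sep (i.e., every 𝔓(𝒞)′-isolated subgroup of X is 𝒞-separable in X), then X is weakly 𝒞-bounded. -/
universe u

/-- A class of groups: a property of groups in universe `u`. -/
abbrev GroupClass : Type (u + 1) := ∀ (G : Type u) [Group G], Prop

namespace Paper

/-- The class `C` consists only of periodic (torsion) groups. -/
def IsPeriodicClass (C : GroupClass.{u}) : Prop :=
  ∀ (G : Type u) [Group G], C G → ∀ g : G, IsOfFinOrder g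

/-- `C` is a root class: closed under isomorphism, contains a non-trivial group, and is
closed under subgroups, extensions, and Cartesian powers `Y → X` with `X, Y ∈ C`. -/
def IsRootClass (C : GroupClass.{u}) : Prop :=
  (∀ (G H : Type u) [Group G] [Group H], (G ≃* H) → C G → C H) ∧
  (∃ (G : Type u) (_ : Group G), C G ∧ Nontrivial G) ∧
  (∀ (G : Type u) [Group G], C G → ∀ H : Subgroup G, C H) ∧
  (∀ (G : Type u) [Group G] (N : Subgroup G) [N.Normal], C N → C (G ⧸ N) → C G) ∧
  (∀ (X Y : Type u) [Group X] [Group Y], C X → C Y → C (Y → X))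

/-- `𝔓(C)`: the set of primes dividing the order of some element of some `C`-group. -/
def classPrimes (C : GroupClass.{u}) : Set ℕ :=
  {p | p.Prime ∧ ∃ (G : Type u) (_ : Group G), C G ∧ ∃ g : G, p ∣ orderOf g}

/-- `Y` is `𝔓′`-isolated in `X` (here `P` plays the role of `𝔓`). -/
def IsolatedIn {X : Type u} [Group X] (P : Set ℕ) (Y : Subgroup X) : Prop :=
  ∀ x : X, ∀ q : ℕ, q.Prime → q ∉ P → x ^ q ∈ Y → x ∈ Y

/-- `X` has no `𝔓′`-torsion. -/
def NoPrimeTorsion (P : Set ℕ) (X : Type u) [Group X] : Prop :=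
  ∀ x : X, ∀ q : ℕ, q.Prime → q ∉ P → x ^ q = 1 → x = 1

/-- `q` is a `P`-number: a positive integer all of whose prime divisors lie in `P`. -/
def IsPNumber (P : Set ℕ) (q : ℕ) : Prop :=
  0 < q ∧ ∀ p : ℕ, p.Prime → p ∣ q → p ∈ P

/-- The `𝔓′`-isolator of `Y` in `X`: the smallest `𝔓′`-isolated subgroup containing `Y`. -/
def isolator {X : Type u} [Group X] (P : Set ℕ) (Y : Subgroup X) : Subgroup X :=
  sInf {Z : Subgroup X | Y ≤ Z ∧ IsolatedIn P Z}

/-- The set `𝔓′-Rt(X, Y)` of `𝔓′`-roots of elements of `Y`. -/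
def rootSet {X : Type u} [Group X] (P : Set ℕ) (Y : Subgroup X) : Set X :=
  {x : X | ∃ q : ℕ, IsPNumber Pᶜ q ∧ x ^ q ∈ Y}

/-- `Y` is `C`-separable in `X`. -/
def SeparableIn (C : GroupClass.{u}) {X : Type u} [Group X] (Y : Subgroup X) : Prop :=
  ∀ x : X, x ∉ Y → ∃ (Q : Type u) (_ : Group Q) (σ : X →* Q),
    C Q ∧ Function.Surjective σ ∧ σ x ∉ Y.map σ

/-- `X` has the property `C`-Sep: every `𝔓(C)′`-isolated subgroup is `C`-separable. -/
def HasSepProp (C : GroupClass.{u}) (X : Type u) [Group X] : Prop :=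
  ∀ Y : Subgroup X, IsolatedIn (classPrimes C) Y → SeparableIn C Y

/-- `X` is residually a `D`-group. -/
def Residually (D : GroupClass.{u}) (X : Type u) [Group X] : Prop :=
  ∀ x : X, x ≠ 1 → ∃ (Q : Type u) (_ : Group Q) (σ : X →* Q),
    D Q ∧ Function.Surjective σ ∧ σ x ≠ 1

/-- Every primary `P`-component of every quotient of `A` has finite exponent
(for abelian `A` this says `A` is weakly bounded w.r.t. the set of primes `P`). -/
def WeaklyBounded (P : Set ℕ) (A : Type u) [Group A] : Prop :=
  ∀ (H : Subgroup A) [H.Normal], ∀ p ∈ P,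
    ∃ e : ℕ, 0 < e ∧ ∀ x : A ⧸ H, (∃ n : ℕ, x ^ p ^ n = 1) → x ^ e = 1

/-- Every primary `𝔓(C)`-component of every quotient of `A` has finite exponent and
cardinality not exceeding the cardinality of some `C`-group. -/
def Bounded (C : GroupClass.{u}) (A : Type u) [Group A] : Prop :=
  ∀ (H : Subgroup A) [H.Normal], ∀ p ∈ classPrimes C,
    (∃ e : ℕ, 0 < e ∧ ∀ x : A ⧸ H, (∃ n : ℕ, x ^ p ^ n = 1) → x ^ e = 1) ∧
    ∃ (G : Type u) (_ : Group G), C G ∧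
      Cardinal.mk {x : A ⧸ H // ∃ n : ℕ, x ^ p ^ n = 1} ≤ Cardinal.mk G

/-- The factor `A / B` (for `B ≤ A` subgroups of an ambient group) is `C`-bounded. -/
def FactorBounded (C : GroupClass.{u}) {X : Type u} [Group X] (B A : Subgroup X)
    (hN : (B.subgroupOf A).Normal) : Prop :=
  letI := hN
  Bounded C (↥A ⧸ B.subgroupOf A)

/-- The factor `A / B` is weakly bounded w.r.t. the set of primes `P`. -/
def FactorWeaklyBounded (P : Set ℕ) {X : Type u} [Group X] (B A : Subgroup X)
    (hN : (B.subgroupOf A).Normal) : Prop :=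
  letI := hN
  WeaklyBounded P (↥A ⧸ B.subgroupOf A)

/-- `X` is a `C`-bounded nilpotent group: it has a finite central series with
`C`-bounded abelian factors. -/
def BoundedNilpotent (C : GroupClass.{u}) (X : Type u) [Group X] : Prop :=
  ∃ (n : ℕ) (H : ℕ → Subgroup X),
    H 0 = ⊥ ∧ H n = ⊤ ∧ (∀ i, H i ≤ H (i + 1)) ∧
    (∀ i, ∀ x ∈ H (i + 1), ∀ g : X, x * g * x⁻¹ * g⁻¹ ∈ H i) ∧
    (∀ i, ∀ hN : ((H i).subgroupOf (H (i + 1))).Normal, FactorBounded C (H i) (H (i + 1)) hN)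

/-- `X` is a weakly `C`-bounded nilpotent group (`P = 𝔓(C)`). -/
def WeaklyBoundedNilpotent (P : Set ℕ) (X : Type u) [Group X] : Prop :=
  ∃ (n : ℕ) (H : ℕ → Subgroup X),
    H 0 = ⊥ ∧ H n = ⊤ ∧ (∀ i, H i ≤ H (i + 1)) ∧
    (∀ i, ∀ x ∈ H (i + 1), ∀ g : X, x * g * x⁻¹ * g⁻¹ ∈ H i) ∧
    (∀ i, ∀ hN : ((H i).subgroupOf (H (i + 1))).Normal,
      FactorWeaklyBounded P (H i) (H (i + 1)) hN)

/-- `X` is a `C`-bounded solvable group: it has a finite subnormal series with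
`C`-bounded abelian factors. -/
def BoundedSolvable (C : GroupClass.{u}) (X : Type u) [Group X] : Prop :=
  ∃ (n : ℕ) (H : ℕ → Subgroup X),
    H 0 = ⊥ ∧ H n = ⊤ ∧ (∀ i, H i ≤ H (i + 1)) ∧
    (∀ i, ∀ g ∈ H (i + 1), ∀ x ∈ H i, g * x * g⁻¹ ∈ H i) ∧
    (∀ i, ∀ x ∈ H (i + 1), ∀ y ∈ H (i + 1), x * y * x⁻¹ * y⁻¹ ∈ H i) ∧
    (∀ i, ∀ hN : ((H i).subgroupOf (H (i + 1))).Normal, FactorBounded C (H i) (H (i + 1)) hN)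

/-- `X` is a weakly `C`-bounded solvable group (`P = 𝔓(C)`). -/
def WeaklyBoundedSolvable (P : Set ℕ) (X : Type u) [Group X] : Prop :=
  ∃ (n : ℕ) (H : ℕ → Subgroup X),
    H 0 = ⊥ ∧ H n = ⊤ ∧ (∀ i, H i ≤ H (i + 1)) ∧
    (∀ i, ∀ g ∈ H (i + 1), ∀ x ∈ H i, g * x * g⁻¹ ∈ H i) ∧
    (∀ i, ∀ x ∈ H (i + 1), ∀ y ∈ H (i + 1), x * y * x⁻¹ * y⁻¹ ∈ H i) ∧
    (∀ i, ∀ hN : ((H i).subgroupOf (H (i + 1))).Normal,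
      FactorWeaklyBounded P (H i) (H (i + 1)) hN)

/-- The class `C-BN` of `C`-bounded nilpotent groups. -/
def BNclass (C : GroupClass.{u}) : GroupClass.{u} := fun G _ => BoundedNilpotent C G

/-- The class `C-BN_{𝔓(C)}` of `𝔓(C)′`-torsion-free `C`-bounded nilpotent groups. -/
def BNPclass (C : GroupClass.{u}) : GroupClass.{u} :=
  fun G _ => BoundedNilpotent C G ∧ NoPrimeTorsion (classPrimes C) G

/-- The class `𝒩C` of nilpotent `C`-groups. -/
def NilpClass (C : GroupClass.{u}) : GroupClass.{u} := fun G _ => C G ∧ Group.IsNilpotent G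

end Paper

namespace PaperAux

open Finset

/-! ### The group `ℚ/ℤ` and elementary arithmetic in it -/

abbrev QZ : Type := ℚ ⧸ AddSubgroup.zmultiples (1 : ℚ)

noncomputable def qz (r : ℚ) : QZ := QuotientAddGroup.mk r

lemma qz_add (r s : ℚ) : qz (r + s) = qz r + qz s := rfl

lemma qz_eq_zero_iff (r : ℚ) : qz r = 0 ↔ ∃ z : ℤ, r = z := by
  rw [qz, QuotientAddGroup.eq_zero_iff]
  simp [AddSubgroup.mem_zmultiples_iff, eq_comm]

lemma qz_int (z : ℤ) : qz z = 0 := (qz_eq_zero_iff z).2 ⟨z, rfl⟩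

lemma qz_zsmul (n : ℤ) (r : ℚ) : n • qz r = qz (n * r) := by
  have h : qz (n • r) = n • qz r := map_zsmul (QuotientAddGroup.mk' _) n r
  rw [← h, zsmul_eq_mul]

lemma qz_eq_iff (r s : ℚ) : qz r = qz s ↔ qz (r - s) = 0 := by
  constructor
  · intro h
    have h2 : qz r - qz s = 0 := by rw [h, sub_self]
    exact h2
  · intro h
    have h2 : qz r - qz s = 0 := h
    exact sub_eq_zero.mp h2

lemma qz_rep (d : QZ) : ∃ r : ℚ, d = qz r := by
  obtain ⟨r, hr⟩ := Quotient.exists_rep d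
  exact ⟨r, hr.symm⟩

/-- If `p^j • d = 0` then `d` is represented by `z / p^j` for some integer `z`. -/
lemma exists_int_rep {p : ℕ} (hp : p.Prime) {j : ℕ} {d : QZ}
    (h : ((p : ℤ)) ^ j • d = 0) : ∃ z : ℤ, d = qz (z / p ^ j) := by
  obtain ⟨r, rfl⟩ := qz_rep d
  rw [qz_zsmul] at h
  obtain ⟨z, hz⟩ := (qz_eq_zero_iff _).1 h
  have hpj : ((p : ℚ) ^ j) ≠ 0 := pow_ne_zero _ (Nat.cast_ne_zero.2 hp.pos.ne')
  refine ⟨z, ?_⟩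
  congr 1
  push_cast at hz
  field_simp
  linarith [hz]

/-- If moreover `p^K • d ≠ 0` (with `p^(K+1) • d = 0`) then the numerator can be
taken coprime to `p`. -/
lemma exists_coprime_rep {p : ℕ} (hp : p.Prime) {K : ℕ} {d : QZ}
    (h1 : ((p : ℤ)) ^ (K + 1) • d = 0) (h2 : ((p : ℤ)) ^ K • d ≠ 0) :
    ∃ z : ℤ, ¬ ((p : ℤ) ∣ z) ∧ d = qz (z / p ^ (K + 1)) := by
  obtain ⟨z, hz⟩ := exists_int_rep hp h1
  refine ⟨z, ?_, hz⟩
  rintro ⟨w, hw⟩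
  apply h2
  have hp0 : (p : ℚ) ≠ 0 := Nat.cast_ne_zero.2 hp.pos.ne'
  have hd : d = qz (w / p ^ K) := by
    rw [hz, hw]
    congr 1
    push_cast
    field_simp
    ring
  rw [hd, qz_zsmul]
  have he : (((p:ℤ)^K : ℤ) : ℚ) * ((w : ℚ) / (p:ℚ) ^ K) = ((w : ℤ) : ℚ) := by
    push_cast
    field_simp
  rw [he, qz_int w]

/-- `qz (z / p^(M+1))` has exact order `p^(M+1)` when `p ∤ z`. -/
lemma exact_order_rep {p : ℕ} (hp : p.Prime) {M : ℕ} {z : ℤ} (hz : ¬ (p:ℤ) ∣ z) :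
    ((p : ℤ)) ^ (M + 1) • qz (z / p ^ (M + 1)) = 0 ∧
      ((p : ℤ)) ^ M • qz (z / p ^ (M + 1)) ≠ 0 := by
  have hp0 : (p : ℚ) ≠ 0 := Nat.cast_ne_zero.2 hp.pos.ne'
  constructor
  · rw [qz_zsmul]
    have he : (((p:ℤ)^(M+1) : ℤ) : ℚ) * ((z : ℚ) / (p:ℚ) ^ (M+1)) = ((z : ℤ) : ℚ) := by
      push_cast
      field_simp
    rw [he, qz_int]
  · rw [qz_zsmul]
    have he : (((p:ℤ)^M : ℤ) : ℚ) * ((z : ℚ) / (p:ℚ) ^ (M+1)) = (z : ℚ) / p := by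
      push_cast
      field_simp
      ring
    rw [he]
    intro h
    obtain ⟨w, hw⟩ := (qz_eq_zero_iff _).1 h
    apply hz
    refine ⟨w, ?_⟩
    have h2 : (z : ℚ) = p * w := by
      field_simp at hw
      linarith [hw]
    exact_mod_cast h2

/-- Solving `(t * (p^n * m)) • s = 1/p` for `s` of exact order `p^(K+1)`, `n ≤ K`,
`p ∤ m`, numerator coprime to `p`. -/
lemma solve_eps {p : ℕ} (hp : p.Prime) {K n : ℕ} (hKn : n ≤ K) {m : ℕ}
    (hm : ¬ (p ∣ m)) {z : ℤ} (hz : ¬ (p:ℤ) ∣ z) :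
    ∃ t : ℤ, (t * ((p:ℤ) ^ n * m)) • qz (z / p ^ (K + 1)) = qz (1 / p) := by
  obtain ⟨c, rfl⟩ := Nat.exists_eq_add_of_le hKn
  -- K = n + c
  have hp0 : (p : ℚ) ≠ 0 := Nat.cast_ne_zero.2 hp.pos.ne'
  have hpz : Prime (p : ℤ) := Nat.prime_iff_prime_int.mp hp
  have hcop : IsCoprime ((m : ℤ) * z) ((p : ℤ) ^ (c + 1)) := by
    apply IsCoprime.pow_right
    rw [Int.isCoprime_iff_gcd_eq_one]
    by_contra hne
    have hdvd : (p : ℤ) ∣ (m : ℤ) * z := by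
      have h1 : (Int.gcd ((m : ℤ) * z) p : ℤ) ∣ (p : ℤ) := Int.gcd_dvd_right _ _
      have h2 : (Int.gcd ((m : ℤ) * z) p) ∣ p := by exact_mod_cast h1
      rcases (Nat.Prime.eq_one_or_self_of_dvd hp _ h2) with h | h
      · exact absurd h hne
      · have h3 := Int.gcd_dvd_left (a := (m : ℤ) * z) (b := (p : ℤ))
        rw [h] at h3
        exact_mod_cast h3
    rcases hpz.dvd_mul.1 hdvd with h | h
    · exact hm (by exact_mod_cast h)
    · exact hz h
  obtain ⟨α, β, hαβ⟩ := hcop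
  refine ⟨α * (p:ℤ) ^ c, ?_⟩
  rw [qz_zsmul, qz_eq_iff]
  have hαβ' : (α : ℚ) * ((m:ℚ) * (z:ℚ)) + (β : ℚ) * (p:ℚ) ^ (c+1) = 1 := by
    exact_mod_cast congrArg (fun x : ℤ => (x : ℚ)) hαβ
  have e1 : (α:ℚ) * (p:ℚ) ^ c * ((p:ℚ) ^ n * (m:ℚ)) * ((z:ℚ) / (p:ℚ) ^ (n + c + 1))
      = ((α:ℚ) * (m:ℚ) * (z:ℚ)) / (p:ℚ) := by
    field_simp
    ring
  have e2 : (α:ℚ) * (m:ℚ) * (z:ℚ) = 1 - (β:ℚ) * (p:ℚ) ^ (c+1) := by linarith [hαβ']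
  have key : ((α * (p:ℤ) ^ c * ((p:ℤ) ^ n * (m:ℤ)) : ℤ) : ℚ) * ((z:ℚ) / (p:ℚ) ^ (n + c + 1))
      - 1 / p = (((- β) * (p:ℤ) ^ c : ℤ) : ℚ) := by
    push_cast
    rw [e1, e2]
    field_simp
    ring
  rw [key, qz_int]

/-! ### Systems of elements and partial characters -/

section Core

variable {A : Type u} [CommGroup A] (p : ℕ)

/-- The invariant of the recursive construction: `y 1, ..., y i` are `p`-torsion
elements, the "character values" `d 1, ..., d i` have exact `p`-power orders at least
`p ^ j`, and all multiplicative relations among the `y j` are respected by the `d j`. -/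
def Good (y : ℕ → A) (d : ℕ → QZ) (i : ℕ) : Prop :=
  (∀ j ∈ Finset.Icc 1 i, ∃ r : ℕ, y j ^ (p ^ r) = 1) ∧
  (∀ j ∈ Finset.Icc 1 i, ∃ K : ℕ, j ≤ K + 1 ∧ ((p:ℤ)) ^ (K+1) • d j = 0 ∧
    ((p:ℤ)) ^ K • d j ≠ 0) ∧
  (∀ t : ℕ → ℤ, (∏ j ∈ Finset.Icc 1 i, y j ^ t j) = 1 →
    (∑ j ∈ Finset.Icc 1 i, t j • d j) = 0)

lemma Good.congr {y y' : ℕ → A} {d d' : ℕ → QZ} {i : ℕ} (hg : Good p y d i)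
    (hy : ∀ j ∈ Finset.Icc 1 i, y' j = y j) (hd : ∀ j ∈ Finset.Icc 1 i, d' j = d j) :
    Good p y' d' i := by
  obtain ⟨h1, h2, h3⟩ := hg
  refine ⟨?_, ?_, ?_⟩
  · intro j hj; rw [hy j hj]; exact h1 j hj
  · intro j hj; rw [hd j hj]; exact h2 j hj
  · intro t ht
    rw [Finset.sum_congr rfl (fun j hj => by rw [hd j hj])]
    apply h3
    rw [← ht]
    exact (Finset.prod_congr rfl (fun j hj => by rw [hy j hj])).symm

lemma exists_order (hp : p.Prime)
    (hU : ∀ N : ℕ, ∃ a : A, (∃ r : ℕ, a ^ p ^ r = 1) ∧ a ^ p ^ N ≠ 1) (N : ℕ) :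
    ∃ (a : A) (r : ℕ), N < r ∧ orderOf a = p ^ r := by
  obtain ⟨a, ⟨nn, h1⟩, h2⟩ := hU N
  have hdvd : orderOf a ∣ p ^ nn := orderOf_dvd_of_pow_eq_one h1
  obtain ⟨r, _, hro⟩ := (Nat.dvd_prime_pow hp).1 hdvd
  refine ⟨a, r, ?_, hro⟩
  by_contra hle
  push_neg at hle
  exact h2 (orderOf_dvd_iff_pow_eq_one.1 (by rw [hro]; exact pow_dvd_pow p hle))

lemma base (hp : p.Prime)
    (hU : ∀ N : ℕ, ∃ a : A, (∃ r : ℕ, a ^ p ^ r = 1) ∧ a ^ p ^ N ≠ 1) :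
    ∃ (y : ℕ → A) (d : ℕ → QZ), Good p y d 1 ∧ d 1 = qz (1 / p) := by
  haveI : Fact p.Prime := ⟨hp⟩
  obtain ⟨a, r, hr, hro⟩ := exists_order p hp hU 0
  obtain ⟨rr, rfl⟩ := Nat.exists_eq_add_of_lt hr
  set y1 : A := a ^ (p ^ rr) with hy1
  have hy1p : y1 ^ p = 1 := by
    rw [hy1, ← pow_mul, ← pow_succ]
    rw [show 0 + rr + 1 = rr + 1 from by omega] at hro
    rw [← hro]
    exact pow_orderOf_eq_one a
  have hy1ne : y1 ≠ 1 := by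
    intro h
    have hdvd : orderOf a ∣ p ^ rr := orderOf_dvd_of_pow_eq_one h
    rw [hro] at hdvd
    have h1 := Nat.le_of_dvd (pow_pos hp.pos _) hdvd
    have h2 : p ^ rr < p ^ (0 + rr + 1) := Nat.pow_lt_pow_right hp.one_lt (by omega)
    omega
  have hord : orderOf y1 = p := orderOf_eq_prime hy1p hy1ne
  have hpd1 : ¬ ((p:ℤ) ∣ (1:ℤ)) := by
    intro h
    have := Int.le_of_dvd one_pos h
    have := hp.one_lt
    omega
  refine ⟨fun _ => y1, fun _ => qz (1 / p), ⟨?_, ?_, ?_⟩, rfl⟩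
  · intro j _
    exact ⟨1, by rw [pow_one]; exact hy1p⟩
  · intro j hj
    have hj1 : j = 1 := by
      simp only [Finset.mem_Icc] at hj; omega
    have h1p : qz (1 / (p:ℚ)) = qz (((1:ℤ) : ℚ) / (p:ℚ) ^ (0 + 1)) := by
      norm_num
    refine ⟨0, by omega, ?_, ?_⟩
    · rw [h1p]; exact (exact_order_rep hp hpd1).1
    · rw [h1p]; exact (exact_order_rep hp hpd1).2
  · intro t ht
    rw [Finset.Icc_self, Finset.prod_singleton] at ht
    rw [Finset.Icc_self, Finset.sum_singleton]
    have hdvd : ((p : ℕ) : ℤ) ∣ t 1 := by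
      have := orderOf_dvd_iff_zpow_eq_one.2 ht
      rwa [hord] at this
    obtain ⟨u, hu⟩ := hdvd
    rw [hu, qz_zsmul]
    apply (qz_eq_zero_iff _).2
    refine ⟨u, ?_⟩
    have hp0 : (p : ℚ) ≠ 0 := Nat.cast_ne_zero.2 hp.pos.ne'
    push_cast
    field_simp

lemma step (hp : p.Prime)
    (hU : ∀ N : ℕ, ∃ a : A, (∃ r : ℕ, a ^ p ^ r = 1) ∧ a ^ p ^ N ≠ 1)
    {i : ℕ} (hi : 1 ≤ i) {y : ℕ → A} {d : ℕ → QZ} (hg : Good p y d i) :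
    ∃ (y' : ℕ → A) (d' : ℕ → QZ), (∀ j, j ≤ i → y' j = y j ∧ d' j = d j) ∧
      Good p y' d' (i + 1) := by
  classical
  obtain ⟨hT, hO, hR⟩ := hg
  -- a uniform killing exponent for the subgroup generated by `y 1, ..., y i`
  have hT2 : ∀ j : ℕ, ∃ r : ℕ, j ∈ Finset.Icc 1 i → y j ^ p ^ r = 1 := by
    intro j
    by_cases h : j ∈ Finset.Icc 1 i
    · obtain ⟨r, hr⟩ := hT j h
      exact ⟨r, fun _ => hr⟩
    · exact ⟨0, fun h' => absurd h' h⟩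
  choose rr hrr using hT2
  set s : ℕ := ∑ j ∈ Finset.Icc 1 i, rr j with hs
  have hrs : ∀ j ∈ Finset.Icc 1 i, rr j ≤ s :=
    fun j hj => Finset.single_le_sum (fun j _ => Nat.zero_le (rr j)) hj
  -- the set of products of powers of the `y j`
  set F : Set A := {a | ∃ t : ℕ → ℤ, a = ∏ j ∈ Finset.Icc 1 i, y j ^ t j} with hF
  have hF1 : (1 : A) ∈ F := ⟨0, by simp⟩
  have hFmul : ∀ a b : A, a ∈ F → b ∈ F → a * b ∈ F := by
    rintro a b ⟨t1, rfl⟩ ⟨t2, rfl⟩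
    refine ⟨t1 + t2, ?_⟩
    rw [← Finset.prod_mul_distrib]
    exact Finset.prod_congr rfl fun j _ => by rw [Pi.add_apply, zpow_add]
  have hFzpow : ∀ (a : A) (u : ℤ), a ∈ F → a ^ u ∈ F := by
    rintro a u ⟨t, rfl⟩
    refine ⟨fun j => t j * u, ?_⟩
    rw [← Finset.prod_zpow]
    exact Finset.prod_congr rfl fun j _ => (zpow_mul (y j) (t j) u).symm
  have hFkill : ∀ a ∈ F, a ^ (p ^ s) = 1 := by
    rintro a ⟨t, rfl⟩
    rw [← Finset.prod_pow]
    apply Finset.prod_eq_one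
    intro j hj
    have h1 : ((y j) ^ (t j)) ^ (p ^ s) = (y j) ^ (t j * (p ^ s : ℕ)) := by
      rw [zpow_mul]
      norm_cast
    rw [h1]
    obtain ⟨w, hw⟩ := Nat.exists_eq_add_of_le (hrs j hj)
    have h2 : (t j * (p ^ s : ℕ) : ℤ) = ((p ^ (rr j) : ℕ) : ℤ) * (t j * ((p ^ w : ℕ) : ℤ)) := by
      push_cast
      rw [hw, pow_add]
      ring
    rw [h2, zpow_mul, zpow_natCast, hrr j hj, one_zpow]
  -- a new element of big order
  obtain ⟨x, r, hri, hxo⟩ := exists_order p hp hU (i + 1 + s)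
  have hex : ∃ k, x ^ (p ^ k) ∈ F := ⟨r, by rw [← hxo, pow_orderOf_eq_one]; exact hF1⟩
  set k := Nat.find hex with hk
  have hkF : x ^ (p ^ k) ∈ F := Nat.find_spec hex
  have hkmin : ∀ j, j < k → x ^ (p ^ j) ∉ F := fun j hj => Nat.find_min hex hj
  have hkr : k ≤ r := Nat.find_le (by rw [← hxo, pow_orderOf_eq_one]; exact hF1)
  have hik : i + 1 < k := by
    have h1 : x ^ (p ^ (k + s)) = 1 := by
      rw [pow_add, pow_mul]
      exact hFkill _ hkF
    have h2 : p ^ r ∣ p ^ (k + s) := by rw [← hxo]; exact orderOf_dvd_of_pow_eq_one h1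
    have h3 : r ≤ k + s := (Nat.pow_dvd_pow_iff_le_right hp.one_lt).1 h2
    omega
  -- the value `v` of the partial character at `x ^ (p ^ k)`
  obtain ⟨c, hc⟩ := id hkF
  set v : QZ := ∑ j ∈ Finset.Icc 1 i, c j • d j with hv
  have hvkill : ((p:ℤ)) ^ (r - k) • v = 0 := by
    rw [hv, Finset.smul_sum]
    have h1 : ∀ j ∈ Finset.Icc 1 i, ((p:ℤ)) ^ (r - k) • c j • d j
        = (((p:ℤ)) ^ (r - k) * c j) • d j := fun j _ => smul_smul _ _ _
    rw [Finset.sum_congr rfl h1]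
    apply hR
    have h2 : ∀ j ∈ Finset.Icc 1 i, y j ^ (((p:ℤ)) ^ (r - k) * c j)
        = (y j ^ c j) ^ (((p:ℤ)) ^ (r - k)) := by
      intro j _
      rw [← zpow_mul, mul_comm]
    rw [Finset.prod_congr rfl h2, Finset.prod_zpow, ← hc]
    have h3 : (x ^ (p ^ k)) ^ (((p:ℤ)) ^ (r - k)) = x ^ ((p ^ r : ℕ) : ℤ) := by
      rw [← zpow_natCast x (p ^ k), ← zpow_mul]
      congr 1
      push_cast
      rw [← pow_add, Nat.add_sub_cancel' hkr]
    rw [h3, zpow_natCast, ← hxo, pow_orderOf_eq_one]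
  -- choose the new character value `dn`
  have hmain : ∃ (dn : QZ) (Kn : ℕ), k ≤ Kn + 1 ∧ ((p:ℤ)) ^ (Kn + 1) • dn = 0 ∧
      ((p:ℤ)) ^ Kn • dn ≠ 0 ∧ ((p:ℤ)) ^ k • dn = v := by
    by_cases hv0 : v = 0
    · obtain ⟨kk, hkk⟩ : ∃ kk, k = kk + 1 := ⟨k - 1, by omega⟩
      have hpd1 : ¬ ((p:ℤ) ∣ (1:ℤ)) := by
        intro h
        have := Int.le_of_dvd one_pos h
        have := hp.one_lt
        omega
      refine ⟨qz (((1:ℤ) : ℚ) / (p:ℚ) ^ (kk + 1)), kk, by omega, (exact_order_rep hp hpd1).1,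
        (exact_order_rep hp hpd1).2, ?_⟩
      rw [hv0, hkk]
      exact (exact_order_rep hp hpd1).1
    · have hex2 : ∃ j, ((p:ℤ)) ^ j • v = 0 := ⟨r - k, hvkill⟩
      set j0 := Nat.find hex2 with hj0
      have hj0spec : ((p:ℤ)) ^ j0 • v = 0 := Nat.find_spec hex2
      have hj0pos : 1 ≤ j0 := by
        rcases Nat.eq_zero_or_pos j0 with h | h
        · exfalso
          apply hv0
          have := hj0spec
          rw [h, pow_zero, one_smul] at this
          exact this
        · exact h
      obtain ⟨jj, hjj⟩ : ∃ jj, j0 = jj + 1 := ⟨j0 - 1, by omega⟩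
      have hjjmin : ((p:ℤ)) ^ jj • v ≠ 0 := Nat.find_min hex2 (by omega)
      obtain ⟨z, hz, hrep⟩ := exists_coprime_rep hp (by rw [← hjj]; exact hj0spec) hjjmin
      refine ⟨qz ((z : ℚ) / (p:ℚ) ^ ((jj + k) + 1)), jj + k, by omega,
        (exact_order_rep hp hz).1, (exact_order_rep hp hz).2, ?_⟩
      rw [hrep, qz_zsmul]
      congr 1
      have hp0 : (p : ℚ) ≠ 0 := Nat.cast_ne_zero.2 hp.pos.ne'
      push_cast
      field_simp
      ring
  obtain ⟨dn, Kn, hkK, hdnkill, hdnnot, hdnv⟩ := hmain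
  -- the new system
  refine ⟨Function.update y (i+1) x, Function.update d (i+1) dn, ?_, ?_, ?_, ?_⟩
  · intro j hj
    constructor
    · exact Function.update_of_ne (by omega) _ _
    · exact Function.update_of_ne (by omega) _ _
  · intro j hj
    rcases eq_or_ne j (i+1) with rfl | hne
    · rw [Function.update_self]
      exact ⟨r, by rw [← hxo]; exact pow_orderOf_eq_one x⟩
    · have hj' : j ∈ Finset.Icc 1 i := by
        simp only [Finset.mem_Icc] at hj ⊢; omega
      rw [Function.update_of_ne hne]
      exact hT j hj'
  · intro j hj
    rcases eq_or_ne j (i+1) with rfl | hne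
    · rw [Function.update_self]
      exact ⟨Kn, by omega, hdnkill, hdnnot⟩
    · have hj' : j ∈ Finset.Icc 1 i := by
        simp only [Finset.mem_Icc] at hj ⊢; omega
      rw [Function.update_of_ne hne]
      exact hO j hj'
  · intro t ht
    rw [Finset.prod_Icc_succ_top (by omega : 1 ≤ i + 1)] at ht
    rw [Finset.sum_Icc_succ_top (by omega : 1 ≤ i + 1)]
    rw [Function.update_self] at ht ⊢
    have hprody : ∀ (u : ℕ → ℤ), (∏ j ∈ Finset.Icc 1 i, Function.update y (i+1) x j ^ u j)
        = ∏ j ∈ Finset.Icc 1 i, y j ^ u j := by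
      intro u
      apply Finset.prod_congr rfl
      intro j hj
      have : j ≠ i + 1 := by simp only [Finset.mem_Icc] at hj; omega
      rw [Function.update_of_ne this]
    have hsumd : (∑ j ∈ Finset.Icc 1 i, t j • Function.update d (i+1) dn j)
        = ∑ j ∈ Finset.Icc 1 i, t j • d j := by
      apply Finset.sum_congr rfl
      intro j hj
      have : j ≠ i + 1 := by simp only [Finset.mem_Icc] at hj; omega
      rw [Function.update_of_ne this]
    rw [hprody] at ht
    rw [hsumd]
    -- `x ^ t (i+1) ∈ F`
    have hxmem : x ^ (t (i+1)) ∈ F := by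
      have h1 : x ^ (t (i+1)) = (∏ j ∈ Finset.Icc 1 i, y j ^ t j)⁻¹ := by
        rw [eq_inv_iff_mul_eq_one, mul_comm]
        exact ht
      rw [h1, show (∏ j ∈ Finset.Icc 1 i, y j ^ t j)⁻¹
        = (∏ j ∈ Finset.Icc 1 i, y j ^ t j) ^ (-1 : ℤ) from by rw [zpow_neg_one]]
      exact hFzpow _ _ ⟨t, rfl⟩
    -- minimality forces `p ^ k ∣ t (i+1)`
    have hdv : ∀ u : ℤ, x ^ u ∈ F → ((p:ℤ)) ^ k ∣ u := by
      intro u hu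
      set g : ℕ := Int.gcd u ((p:ℤ) ^ k) with hgdef
      have hg : (g : ℤ) = u * Int.gcdA u ((p:ℤ) ^ k) + ((p:ℤ)) ^ k * Int.gcdB u ((p:ℤ) ^ k) :=
        Int.gcd_eq_gcd_ab u ((p:ℤ) ^ k)
      have hxg : x ^ (g : ℤ) ∈ F := by
        rw [hg, zpow_add, zpow_mul, zpow_mul]
        apply hFmul
        · exact hFzpow _ _ hu
        · apply hFzpow
          have : x ^ ((p:ℤ) ^ k) = x ^ (p ^ k) := by
            rw [← zpow_natCast x (p ^ k)]
            congr 1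
          rw [this]
          exact hkF
      have hgdvd : g ∣ p ^ k := by
        have h1 : (g : ℤ) ∣ ((p ^ k : ℕ) : ℤ) := by
          push_cast
          exact Int.gcd_dvd_right _ _
        exact_mod_cast h1
      obtain ⟨k2, hk2le, hgk⟩ := (Nat.dvd_prime_pow hp).1 hgdvd
      have hxk2 : x ^ (p ^ k2) ∈ F := by
        have : x ^ ((p ^ k2 : ℕ) : ℤ) ∈ F := by
          rw [show ((p ^ k2 : ℕ) : ℤ) = (g : ℤ) from by rw [hgk]]
          exact hxg
        rwa [zpow_natCast] at this
      have hk2k : k2 = k := by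
        by_contra hne
        exact (hkmin k2 (by omega)) hxk2
      have : (g : ℤ) ∣ u := Int.gcd_dvd_left _ _
      rw [hgk, hk2k] at this
      have h2 : ((p ^ k : ℕ) : ℤ) ∣ u := by exact_mod_cast this
      rwa [show ((p ^ k : ℕ) : ℤ) = ((p:ℤ)) ^ k from by push_cast; ring] at h2
    obtain ⟨u, hu⟩ := hdv _ hxmem
    -- rewrite the relation and use `hR`
    have hxtu : x ^ (t (i+1)) = ∏ j ∈ Finset.Icc 1 i, y j ^ (c j * u) := by
      rw [hu]
      have h1 : x ^ (((p:ℤ)) ^ k * u) = (x ^ (p ^ k)) ^ u := by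
        rw [← zpow_natCast x (p ^ k), ← zpow_mul]
        congr 1
      rw [h1, hc, ← Finset.prod_zpow]
      exact Finset.prod_congr rfl fun j _ => (zpow_mul (y j) (c j) u).symm
    have hrel : (∏ j ∈ Finset.Icc 1 i, y j ^ (t j + c j * u)) = 1 := by
      have h1 : (∏ j ∈ Finset.Icc 1 i, y j ^ (t j + c j * u))
          = (∏ j ∈ Finset.Icc 1 i, y j ^ t j) * ∏ j ∈ Finset.Icc 1 i, y j ^ (c j * u) := by
        rw [← Finset.prod_mul_distrib]
        exact Finset.prod_congr rfl fun j _ => (zpow_add (y j) (t j) (c j * u))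
      rw [h1, ← hxtu]
      exact ht
    have hsum0 := hR _ hrel
    have hsplit : (∑ j ∈ Finset.Icc 1 i, (t j + c j * u) • d j)
        = (∑ j ∈ Finset.Icc 1 i, t j • d j) + u • v := by
      rw [hv, Finset.smul_sum, ← Finset.sum_add_distrib]
      apply Finset.sum_congr rfl
      intro j _
      rw [add_smul]
      congr 1
      rw [smul_smul, mul_comm u (c j)]
    rw [hsplit] at hsum0
    have htend : t (i+1) • dn = u • v := by
      rw [hu, ← hdnv, smul_smul, mul_comm u ((p:ℤ) ^ k)]
    rw [htend]
    exact hsum0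



lemma exists_system (hp : p.Prime)
    (hU : ∀ N : ℕ, ∃ a : A, (∃ r : ℕ, a ^ p ^ r = 1) ∧ a ^ p ^ N ≠ 1) :
    ∃ (y : ℕ → A) (d : ℕ → QZ), (∀ i, 1 ≤ i → Good p y d i) ∧ d 1 = qz (1 / p) := by
  classical
  obtain ⟨y₀, d₀, hg₀, hd₀⟩ := base p hp hU
  have hstep : ∀ (i : ℕ) (st : (ℕ → A) × (ℕ → QZ)), ∃ st' : (ℕ → A) × (ℕ → QZ),
      1 ≤ i → Good p st.1 st.2 i →
        ((∀ j, j ≤ i → st'.1 j = st.1 j ∧ st'.2 j = st.2 j) ∧ Good p st'.1 st'.2 (i+1)) := by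
    intro i st
    by_cases h : 1 ≤ i ∧ Good p st.1 st.2 i
    · obtain ⟨y', d', hagree, hg⟩ := step p hp hU h.1 h.2
      exact ⟨(y', d'), fun _ _ => ⟨hagree, hg⟩⟩
    · exact ⟨st, fun h1 h2 => absurd ⟨h1, h2⟩ h⟩
  choose next hnext using hstep
  let seq : ℕ → (ℕ → A) × (ℕ → QZ) := fun n => Nat.rec (y₀, d₀) (fun n st => next (n+1) st) n
  have hseq_succ : ∀ n, seq (n+1) = next (n+1) (seq n) := fun n => rfl
  have hgood : ∀ n, Good p (seq n).1 (seq n).2 (n+1) := by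
    intro n
    induction n with
    | zero => exact hg₀
    | succ n ih =>
      rw [hseq_succ]
      exact ((hnext (n+1) (seq n)) (by omega) ih).2
  have hagree : ∀ n j, j ≤ n + 1 →
      (seq (n+1)).1 j = (seq n).1 j ∧ (seq (n+1)).2 j = (seq n).2 j := by
    intro n j hj
    rw [hseq_succ]
    exact ((hnext (n+1) (seq n)) (by omega) (hgood n)).1 j hj
  have hstable : ∀ n m j, j ≤ n + 1 → n ≤ m →
      (seq m).1 j = (seq n).1 j ∧ (seq m).2 j = (seq n).2 j := by
    intro n m j hj hnm
    induction m with
    | zero =>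
      have h0 : n = 0 := by omega
      subst h0
      exact ⟨rfl, rfl⟩
    | succ m ih =>
      rcases Nat.eq_or_lt_of_le hnm with h | h
      · subst h; exact ⟨rfl, rfl⟩
      · have h1 := hagree m j (by omega)
        have h2 := ih (by omega)
        exact ⟨h1.1.trans h2.1, h1.2.trans h2.2⟩
  refine ⟨fun j => (seq j).1 j, fun j => (seq j).2 j, ?_, ?_⟩
  · intro i hi
    obtain ⟨ii, rfl⟩ : ∃ ii, i = ii + 1 := ⟨i - 1, by omega⟩
    apply Good.congr p (hgood ii)
    · intro j hj
      simp only [Finset.mem_Icc] at hj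
      rcases Nat.lt_or_ge j (ii + 1) with h | h
      · exact (hstable j ii j (by omega) (by omega)).1.symm
      · have hj' : j = ii + 1 := by omega
        subst hj'
        exact (hstable ii (ii+1) (ii+1) (by omega) (by omega)).1
    · intro j hj
      simp only [Finset.mem_Icc] at hj
      rcases Nat.lt_or_ge j (ii + 1) with h | h
      · exact (hstable j ii j (by omega) (by omega)).2.symm
      · have hj' : j = ii + 1 := by omega
        subst hj'
        exact (hstable ii (ii+1) (ii+1) (by omega) (by omega)).2
  · have h1 := (hstable 0 1 1 (by omega) (by omega)).2
    show (seq 1).2 1 = qz (1 / (p:ℚ))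
    exact h1.trans hd₀

/-- A `P′`-number: a positive integer none of whose prime divisors lies in `P`. -/
def PNum (P : Set ℕ) (m : ℕ) : Prop := 0 < m ∧ ∀ q : ℕ, q.Prime → q ∣ m → q ∉ P

/-- The key construction: if the `p`-torsion of `A` has unbounded exponent, there is a
subgroup `YA` of `A` which is `P′`-isolated, and an element `x ∉ YA` divisible by every
positive integer modulo `YA`. -/
lemma core (hp : p.Prime) {P : Set ℕ} (hpP : p ∈ P)
    (hU : ∀ N : ℕ, ∃ a : A, (∃ r : ℕ, a ^ p ^ r = 1) ∧ a ^ p ^ N ≠ 1) :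
    ∃ (YA : Subgroup A) (x : A),
      (∀ a : A, ∀ q : ℕ, q.Prime → q ∉ P → a ^ q ∈ YA → a ∈ YA) ∧ x ∉ YA ∧
      ∀ e : ℕ, 0 < e → ∃ w ∈ YA, ∃ z : A, x = w * z ^ e := by
  classical
  obtain ⟨y, d, hGood, hd1⟩ := exists_system p hp hU
  -- the "kernel" subgroup N
  set NC : Set A := {a | ∃ (i : ℕ) (t : ℕ → ℤ), a = ∏ j ∈ Finset.Icc 1 i, y j ^ t j ∧
      (∑ j ∈ Finset.Icc 1 i, t j • d j) = 0} with hNC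
  have hpad : ∀ (i i' : ℕ), i ≤ i' → ∀ t : ℕ → ℤ, ∃ t' : ℕ → ℤ,
      (∏ j ∈ Finset.Icc 1 i', y j ^ t' j) = (∏ j ∈ Finset.Icc 1 i, y j ^ t j) ∧
      (∑ j ∈ Finset.Icc 1 i', t' j • d j) = (∑ j ∈ Finset.Icc 1 i, t j • d j) := by
    intro i i' hii t
    refine ⟨fun j => if j ≤ i then t j else 0, ?_, ?_⟩
    · rw [(Finset.prod_subset (Finset.Icc_subset_Icc_right hii) ?_ :
        (∏ j ∈ Finset.Icc 1 i, y j ^ (if j ≤ i then t j else 0)) = _).symm]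
      · apply Finset.prod_congr rfl
        intro j hj
        simp only [Finset.mem_Icc] at hj
        rw [if_pos hj.2]
      · intro j hj hj'
        simp only [Finset.mem_Icc] at hj hj'
        rw [if_neg (by omega), zpow_zero]
    · rw [(Finset.sum_subset (Finset.Icc_subset_Icc_right hii) ?_ :
        (∑ j ∈ Finset.Icc 1 i, (if j ≤ i then t j else 0) • d j) = _).symm]
      · apply Finset.sum_congr rfl
        intro j hj
        simp only [Finset.mem_Icc] at hj
        rw [if_pos hj.2]
      · intro j hj hj'
        simp only [Finset.mem_Icc] at hj hj'
        rw [if_neg (by omega), zero_smul]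
  have hN1 : (1 : A) ∈ NC := ⟨0, 0, by simp, by simp⟩
  have hNmul : ∀ a b : A, a ∈ NC → b ∈ NC → a * b ∈ NC := by
    rintro a b ⟨i1, t1, hr1, hs1⟩ ⟨i2, t2, hr2, hs2⟩
    obtain ⟨t1', hr1', hs1'⟩ := hpad i1 (max i1 i2) (le_max_left _ _) t1
    obtain ⟨t2', hr2', hs2'⟩ := hpad i2 (max i1 i2) (le_max_right _ _) t2
    refine ⟨max i1 i2, t1' + t2', ?_, ?_⟩
    · rw [hr1, hr2, ← hr1', ← hr2', ← Finset.prod_mul_distrib]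
      exact Finset.prod_congr rfl fun j _ => by rw [Pi.add_apply, zpow_add]
    · have : (∑ j ∈ Finset.Icc 1 (max i1 i2), (t1' + t2') j • d j)
          = (∑ j ∈ Finset.Icc 1 (max i1 i2), t1' j • d j)
            + (∑ j ∈ Finset.Icc 1 (max i1 i2), t2' j • d j) := by
        rw [← Finset.sum_add_distrib]
        exact Finset.sum_congr rfl fun j _ => by rw [Pi.add_apply, add_smul]
      rw [this, hs1', hs2', hs1, hs2, add_zero]
  have hNinv : ∀ a : A, a ∈ NC → a⁻¹ ∈ NC := by
    rintro a ⟨i, t, hr, hsum⟩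
    refine ⟨i, -t, ?_, ?_⟩
    · rw [hr, ← Finset.prod_inv_distrib]
      exact Finset.prod_congr rfl fun j _ => by rw [Pi.neg_apply, zpow_neg]
    · have : (∑ j ∈ Finset.Icc 1 i, (-t) j • d j) = -(∑ j ∈ Finset.Icc 1 i, t j • d j) := by
        rw [← Finset.sum_neg_distrib]
        exact Finset.sum_congr rfl fun j _ => by rw [Pi.neg_apply, neg_smul]
      rw [this, hsum, neg_zero]
  set N : Subgroup A :=
    { carrier := NC
      one_mem' := hN1
      mul_mem' := fun ha hb => hNmul _ _ ha hb
      inv_mem' := fun ha => hNinv _ ha } with hNdef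
  -- the isolator of N
  set YC : Set A := {a | ∃ m : ℕ, PNum P m ∧ a ^ m ∈ N} with hYC
  have hPNum1 : PNum P 1 := ⟨one_pos, fun q hq hdvd _ => by
    have := Nat.le_of_dvd one_pos hdvd
    have := hq.one_lt
    omega⟩
  have hPNummul : ∀ m1 m2, PNum P m1 → PNum P m2 → PNum P (m1 * m2) := by
    rintro m1 m2 ⟨h1, h1'⟩ ⟨h2, h2'⟩
    refine ⟨by positivity, ?_⟩
    intro q hq hdvd
    rcases (Nat.Prime.dvd_mul hq).1 hdvd with h | h
    · exact h1' q hq h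
    · exact h2' q hq h
  have hY1 : (1 : A) ∈ YC := ⟨1, hPNum1, by rw [one_pow]; exact N.one_mem⟩
  have hYmul : ∀ a b : A, a ∈ YC → b ∈ YC → a * b ∈ YC := by
    rintro a b ⟨m1, hm1, ha⟩ ⟨m2, hm2, hb⟩
    refine ⟨m1 * m2, hPNummul m1 m2 hm1 hm2, ?_⟩
    rw [mul_pow]
    apply N.mul_mem
    · rw [pow_mul]
      exact N.pow_mem ha m2
    · rw [mul_comm m1 m2, pow_mul]
      exact N.pow_mem hb m1
  have hYinv : ∀ a : A, a ∈ YC → a⁻¹ ∈ YC := by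
    rintro a ⟨m, hm, ha⟩
    exact ⟨m, hm, by rw [inv_pow]; exact N.inv_mem ha⟩
  set YA : Subgroup A :=
    { carrier := YC
      one_mem' := hY1
      mul_mem' := fun ha hb => hYmul _ _ ha hb
      inv_mem' := fun ha => hYinv _ ha } with hYAdef
  have hmemYA : ∀ a : A, a ∈ YA ↔ ∃ m : ℕ, PNum P m ∧ a ^ m ∈ N := fun a => Iff.rfl
  have hmemN : ∀ a : A, a ∈ N ↔ a ∈ NC := fun a => Iff.rfl
  have hNY : ∀ a : A, a ∈ N → a ∈ YA := by
    intro a ha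
    exact ⟨1, hPNum1, by rw [pow_one]; exact ha⟩
  refine ⟨YA, y 1, ?_, ?_, ?_⟩
  · -- isolated
    rintro a q hq hqP ⟨m, hm, hmem⟩
    refine ⟨q * m, ?_, ?_⟩
    · refine ⟨by have := hq.pos; have := hm.1; positivity, ?_⟩
      intro q' hq' hdvd
      rcases (Nat.Prime.dvd_mul hq').1 hdvd with h | h
      · rwa [(Nat.prime_dvd_prime_iff_eq hq' hq).1 h]
      · exact hm.2 q' hq' h
    · rw [pow_mul]
      exact hmem
  · -- y 1 ∉ YA
    rintro ⟨m, hm, hmem⟩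
    obtain ⟨i, t, hrep, hsum⟩ := hmem
    obtain ⟨t', hrep', hsum'⟩ := hpad i (max i 1) (le_max_left _ _) t
    rw [← hrep'] at hrep
    rw [← hsum'] at hsum
    set i' := max i 1 with hi'
    have h1i' : 1 ≤ i' := le_max_right _ _
    set t2 : ℕ → ℤ := fun j => t' j + (if j = 1 then -(m : ℤ) else 0) with ht2
    have hrel : (∏ j ∈ Finset.Icc 1 i', y j ^ t2 j) = 1 := by
      have hsplit : (∏ j ∈ Finset.Icc 1 i', y j ^ t2 j)
          = (∏ j ∈ Finset.Icc 1 i', y j ^ t' j)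
            * ∏ j ∈ Finset.Icc 1 i', y j ^ (if j = 1 then -(m:ℤ) else 0) := by
        rw [← Finset.prod_mul_distrib]
        exact Finset.prod_congr rfl fun j _ => by rw [ht2, zpow_add]
      have hone : (∏ j ∈ Finset.Icc 1 i', y j ^ (if j = 1 then -(m:ℤ) else 0))
          = (y 1) ^ (-(m:ℤ)) := by
        rw [Finset.prod_eq_single 1]
        · rw [if_pos rfl]
        · intro j _ hj
          rw [if_neg hj, zpow_zero]
        · intro h
          exact absurd (Finset.mem_Icc.2 ⟨le_refl 1, h1i'⟩) h
      rw [hsplit, hone, ← hrep, zpow_neg, zpow_natCast, mul_inv_cancel]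
    have hsum2 := (hGood i' h1i').2.2 t2 hrel
    have hsplit2 : (∑ j ∈ Finset.Icc 1 i', t2 j • d j)
        = (∑ j ∈ Finset.Icc 1 i', t' j • d j)
          + ∑ j ∈ Finset.Icc 1 i', (if j = 1 then -(m:ℤ) else 0) • d j := by
      rw [← Finset.sum_add_distrib]
      exact Finset.sum_congr rfl fun j _ => by rw [ht2, add_smul]
    have hone2 : (∑ j ∈ Finset.Icc 1 i', (if j = 1 then -(m:ℤ) else 0) • d j)
        = (-(m:ℤ)) • d 1 := by
      rw [Finset.sum_eq_single 1]
      · rw [if_pos rfl]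
      · intro j _ hj
        rw [if_neg hj, zero_smul]
      · intro h
        exact absurd (Finset.mem_Icc.2 ⟨le_refl 1, h1i'⟩) h
    rw [hsplit2, hone2, hsum] at hsum2
    have hmd1 : (m : ℤ) • d 1 = 0 := by
      have : (-(m:ℤ)) • d 1 = 0 := by rw [← hsum2]; abel
      rw [neg_smul] at this
      exact neg_eq_zero.1 this
    rw [hd1, qz_zsmul] at hmd1
    obtain ⟨zz, hzz⟩ := (qz_eq_zero_iff _).1 hmd1
    have hp0 : (p : ℚ) ≠ 0 := Nat.cast_ne_zero.2 hp.pos.ne'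
    have hdvd : p ∣ m := by
      have h2 : (m : ℚ) = p * zz := by
        field_simp at hzz
        push_cast at hzz ⊢
        linarith [hzz]
      have h3 : (m : ℤ) = p * zz := by exact_mod_cast h2
      have h4 : (p : ℤ) ∣ (m : ℤ) := ⟨zz, h3⟩
      exact_mod_cast h4
    exact (hm.2 p hp hdvd) hpP
  · -- divisibility
    intro e he
    set n := e.factorization p with hn
    set m := e / p ^ n with hm
    have hem : p ^ n * m = e := Nat.ordProj_mul_ordCompl_eq_self e p
    have hpm : ¬ p ∣ m := Nat.not_dvd_ordCompl hp (by omega)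
    obtain ⟨K, hK1, hKkill, hKnot⟩ := (hGood (n+1) (by omega)).2.1 (n+1)
      (Finset.mem_Icc.2 ⟨by omega, le_refl _⟩)
    obtain ⟨z, hz, hrepd⟩ := exists_coprime_rep hp hKkill hKnot
    obtain ⟨tt, htt⟩ := solve_eps hp (show n ≤ K by omega) hpm hz
    have hted : (tt * (e:ℤ)) • d (n+1) = qz (1 / p) := by
      rw [hrepd]
      rw [show (tt * (e:ℤ)) = tt * ((p:ℤ) ^ n * (m:ℤ)) from by rw [← hem]; push_cast; ring]
      exact htt
    -- the witness element of N
    set t0 : ℕ → ℤ := fun j => (if j = 1 then 1 else 0) + (if j = n+1 then -(tt * (e:ℤ)) else 0)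
      with ht0
    have hprod0 : (∏ j ∈ Finset.Icc 1 (n+1), y j ^ t0 j)
        = y 1 * (y (n+1) ^ (tt * (e:ℤ)))⁻¹ := by
      have hsplit : (∏ j ∈ Finset.Icc 1 (n+1), y j ^ t0 j)
          = (∏ j ∈ Finset.Icc 1 (n+1), y j ^ (if j = 1 then (1:ℤ) else 0))
            * ∏ j ∈ Finset.Icc 1 (n+1), y j ^ (if j = n+1 then -(tt * (e:ℤ)) else 0) := by
        rw [← Finset.prod_mul_distrib]
        exact Finset.prod_congr rfl fun j _ => by rw [ht0, zpow_add]
      have h1 : (∏ j ∈ Finset.Icc 1 (n+1), y j ^ (if j = 1 then (1:ℤ) else 0)) = y 1 := by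
        rw [Finset.prod_eq_single 1]
        · rw [if_pos rfl, zpow_one]
        · intro j _ hj
          rw [if_neg hj, zpow_zero]
        · intro h
          exact absurd (Finset.mem_Icc.2 ⟨le_refl 1, by omega⟩) h
      have h2 : (∏ j ∈ Finset.Icc 1 (n+1), y j ^ (if j = n+1 then -(tt * (e:ℤ)) else 0))
          = (y (n+1)) ^ (-(tt * (e:ℤ))) := by
        rw [Finset.prod_eq_single (n+1)]
        · rw [if_pos rfl]
        · intro j _ hj
          rw [if_neg hj, zpow_zero]
        · intro h
          exact absurd (Finset.mem_Icc.2 ⟨by omega, le_refl _⟩) h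
      rw [hsplit, h1, h2, zpow_neg]
    have hsum0 : (∑ j ∈ Finset.Icc 1 (n+1), t0 j • d j) = 0 := by
      have hsplit : (∑ j ∈ Finset.Icc 1 (n+1), t0 j • d j)
          = (∑ j ∈ Finset.Icc 1 (n+1), (if j = 1 then (1:ℤ) else 0) • d j)
            + ∑ j ∈ Finset.Icc 1 (n+1), (if j = n+1 then -(tt * (e:ℤ)) else 0) • d j := by
        rw [← Finset.sum_add_distrib]
        exact Finset.sum_congr rfl fun j _ => by rw [ht0, add_smul]
      have h1 : (∑ j ∈ Finset.Icc 1 (n+1), (if j = 1 then (1:ℤ) else 0) • d j) = d 1 := by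
        rw [Finset.sum_eq_single 1]
        · rw [if_pos rfl, one_smul]
        · intro j _ hj
          rw [if_neg hj, zero_smul]
        · intro h
          exact absurd (Finset.mem_Icc.2 ⟨le_refl 1, by omega⟩) h
      have h2 : (∑ j ∈ Finset.Icc 1 (n+1), (if j = n+1 then -(tt * (e:ℤ)) else 0) • d j)
          = (-(tt * (e:ℤ))) • d (n+1) := by
        rw [Finset.sum_eq_single (n+1)]
        · rw [if_pos rfl]
        · intro j _ hj
          rw [if_neg hj, zero_smul]
        · intro h
          exact absurd (Finset.mem_Icc.2 ⟨by omega, le_refl _⟩) h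
      rw [hsplit, h1, h2, neg_smul, hted, hd1]
      abel
    have hwN : y 1 * (y (n+1) ^ (tt * (e:ℤ)))⁻¹ ∈ N := ⟨n+1, t0, hprod0.symm, hsum0⟩
    refine ⟨y 1 * (y (n+1) ^ (tt * (e:ℤ)))⁻¹, hNY _ hwN, y (n+1) ^ tt, ?_⟩
    have hze : (y (n+1) ^ tt) ^ e = y (n+1) ^ (tt * (e:ℤ)) := by
      rw [← zpow_natCast (y (n+1) ^ tt) e, ← zpow_mul]
    rw [hze]
    rw [inv_mul_cancel_right]

end Core


end PaperAux

namespace Paper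

/-- Theorem 1.1(1): if an abelian group `X` has the property `C`-Sep for a
root class `C` consisting only of periodic groups, then `X` is weakly `C`-bounded. -/
theorem statement0 (C : GroupClass.{u}) (hroot : IsRootClass C) (hper : IsPeriodicClass C)
    (X : Type u) [CommGroup X] (hsep : HasSepProp C X) :
    WeaklyBounded (classPrimes C) X := by
  intro H _ p hp
  by_contra hcon
  push_neg at hcon
  have hp' : p.Prime := hp.1
  have hU : ∀ N : ℕ, ∃ a : X ⧸ H, (∃ r : ℕ, a ^ p ^ r = 1) ∧ a ^ p ^ N ≠ 1 := by
    intro N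
    obtain ⟨a, ha1, ha2⟩ := hcon (p ^ N) (pow_pos hp'.pos N)
    exact ⟨a, ha1, ha2⟩
  obtain ⟨YA, xb, hiso, hxY, hdiv⟩ := PaperAux.core (A := X ⧸ H) p hp' hp hU
  obtain ⟨x0, hx0⟩ := QuotientGroup.mk'_surjective H xb
  set Y : Subgroup X := YA.comap (QuotientGroup.mk' H) with hY
  have hx0Y : x0 ∉ Y := by
    intro h
    rw [hY, Subgroup.mem_comap, hx0] at h
    exact hxY h
  have hYiso : IsolatedIn (classPrimes C) Y := by
    intro a q hq hqP ha
    rw [hY, Subgroup.mem_comap] at ha ⊢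
    rw [map_pow] at ha
    exact hiso _ q hq hqP ha
  obtain ⟨Q, _, τ, hCQ, hτsurj, hτx⟩ := hsep Y hYiso x0 hx0Y
  have hCQQ : C (Q → Q) := hroot.2.2.2.2 Q Q hCQ hCQ
  have hfin : IsOfFinOrder (id : Q → Q) := hper (Q → Q) hCQQ id
  set e := orderOf (id : Q → Q) with he
  have hepos : 0 < e := hfin.orderOf_pos
  have hkill : ∀ qq : Q, qq ^ e = 1 := by
    intro qq
    have h1 := pow_orderOf_eq_one (id : Q → Q)
    have h2 := congrFun h1 qq
    simpa using h2
  obtain ⟨w, hwY, z, hxz⟩ := hdiv e hepos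
  obtain ⟨zl, hzl⟩ := QuotientGroup.mk'_surjective H z
  have hwit : x0 * (zl ^ e)⁻¹ ∈ Y := by
    rw [hY, Subgroup.mem_comap, map_mul, map_inv, map_pow, hzl, hx0, hxz]
    simpa using hwY
  apply hτx
  refine ⟨x0 * (zl ^ e)⁻¹, hwit, ?_⟩
  rw [map_mul, map_inv, map_pow, hkill (τ zl), inv_one, mul_one]

end Paper
end

section
/- Let 𝒞 be a root class of groups consisting only of periodic groups, and let X be a weakly 𝒞-bounded abelian group. Then X has the property 𝒞-Sep, and moreover X has the property 𝒫-Sep, where 𝒫 = ⋃_{p ∈ 𝔓(𝒞)} ℱ_p and ℱ_p is the class of finite p-groups (note 𝔓(𝒫) = 𝔓(𝒞), so 𝒫-Sep means every 𝔓(𝒞)′-isolated subgroup of X is separable in X by the class of finite 𝔓(𝒞)-groups of prime-power order). -/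
universe u

namespace Paper

/-- The class `𝒫 = ⋃_{p ∈ 𝔓(C)} ℱ_p` of finite `p`-groups for primes `p ∈ 𝔓(C)`. -/
def FinPClass (C : GroupClass.{u}) : GroupClass.{u} :=
  fun G _ => ∃ p ∈ classPrimes C, Finite G ∧ IsPGroup p G


section Helpers

open Subgroup

variable {C : GroupClass.{u}}

lemma trivial_mem (hroot : IsRootClass C) (Q : Type u) [Group Q] (hQ : Subsingleton Q) : C Q := by
  obtain ⟨G, hG, hCG, hnt⟩ := hroot.2.1
  have hbot : C ↥(⊥ : Subgroup G) := hroot.2.2.1 G hCG ⊥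
  have hsub : Subsingleton ↥(⊥ : Subgroup G) := by
    constructor; rintro ⟨a, ha⟩ ⟨b, hb⟩
    simp only [Subgroup.mem_bot] at ha hb; subst ha; subst hb; rfl
  exact hroot.1 _ _
    { toFun := fun _ => 1, invFun := fun _ => 1,
      left_inv := fun a => Subsingleton.elim _ _,
      right_inv := fun a => Subsingleton.elim _ _,
      map_mul' := fun a b => (Subsingleton.elim _ _) } hbot

lemma classPrimes_nonempty (hroot : IsRootClass C) (hper : IsPeriodicClass C) :
    ∃ p, p ∈ classPrimes C := by
  obtain ⟨G, hG, hCG, hnt⟩ := hroot.2.1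
  obtain ⟨g, hg⟩ := exists_ne (1 : G)
  have hfin := hper G hCG g
  have hpos : 0 < orderOf g := hfin.orderOf_pos
  have hne1 : orderOf g ≠ 1 := fun h => hg (orderOf_eq_one_iff.1 h)
  refine ⟨(orderOf g).minFac, Nat.minFac_prime hne1, G, hG, hCG, g, Nat.minFac_dvd _⟩

/-- a cyclic group of order `p` in `C`, for `p ∈ 𝔓(C)`. -/
lemma exists_cyclic_p (hroot : IsRootClass C) (hper : IsPeriodicClass C) {p : ℕ}
    (hp : p ∈ classPrimes C) :
    ∃ (Z : Type u) (_ : Group Z), C Z ∧ Nat.card Z = p := by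
  obtain ⟨hpp, G, hG, hCG, g, hdvd⟩ := hp
  have hfin := hper G hCG g
  have hpos : 0 < orderOf g := hfin.orderOf_pos
  obtain ⟨t, ht⟩ := hdvd
  have htpos : 0 < t := by
    rcases Nat.eq_zero_or_pos t with h | h
    · subst h; simp only [mul_zero] at ht; omega
    · exact h
  set h : G := g ^ t with hh
  have hhp : h ^ p = 1 := by
    rw [hh, ← pow_mul, mul_comm, ← ht, pow_orderOf_eq_one]
  have hhne : h ≠ 1 := by
    intro hcon
    have : orderOf g ∣ t := orderOf_dvd_of_pow_eq_one hcon
    have := Nat.le_of_dvd htpos this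
    nlinarith [hpp.two_le]
  have horder : orderOf h = p := by
    have hdvd' : orderOf h ∣ p := orderOf_dvd_of_pow_eq_one hhp
    rcases (Nat.dvd_prime hpp).1 hdvd' with h1 | h1
    · exact absurd (orderOf_eq_one_iff.1 h1) hhne
    · exact h1
  exact ⟨↥(zpowers h), inferInstance, hroot.2.2.1 G hCG _, by
    rw [Nat.card_zpowers, horder]⟩

/-- every finite commutative p-group, p ∈ 𝔓(C), lies in C. -/
lemma pgroup_mem (hroot : IsRootClass C) (hper : IsPeriodicClass C) {p : ℕ}
    (hp : p ∈ classPrimes C) :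
    ∀ (n : ℕ) (Q : Type u) (_ : CommGroup Q), Finite Q → IsPGroup p Q → Nat.card Q ≤ n → C Q := by
  have hpp : p.Prime := hp.1
  haveI : Fact p.Prime := ⟨hpp⟩
  intro n
  induction n with
  | zero =>
    intro Q _ hfin _ hcard
    have : 0 < Nat.card Q := Nat.card_pos
    omega
  | succ n ih =>
    intro Q _ hfin hpg hcard
    by_cases hss : Subsingleton Q
    · exact trivial_mem hroot Q hss
    · obtain ⟨q, hq⟩ : ∃ q : Q, q ≠ 1 := by
        rcases not_subsingleton_iff_nontrivial.1 hss with ⟨⟨a, b, hab⟩⟩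
        by_cases ha : a = 1
        · exact ⟨b, by rintro rfl; exact hab ha⟩
        · exact ⟨a, ha⟩
      -- element of order exactly p
      obtain ⟨k, hk⟩ := hpg q
      have hodvd : orderOf q ∣ p ^ k := orderOf_dvd_of_pow_eq_one hk
      obtain ⟨j, hjk, hj⟩ := (Nat.dvd_prime_pow hpp).1 hodvd
      have hj1 : 1 ≤ j := by
        by_contra hcon
        push_neg at hcon
        interval_cases j
        rw [pow_zero] at hj
        exact hq (orderOf_eq_one_iff.1 hj)
      set z : Q := q ^ p ^ (j - 1) with hz
      have hzp : z ^ p = 1 := by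
        rw [hz, ← pow_mul, ← pow_succ, Nat.sub_add_cancel hj1, ← hj, pow_orderOf_eq_one]
      have hzne : z ≠ 1 := by
        intro hcon
        have : orderOf q ∣ p ^ (j - 1) := orderOf_dvd_of_pow_eq_one hcon
        rw [hj] at this
        have hle : j ≤ j - 1 :=
          (Nat.pow_dvd_pow_iff_le_right hpp.one_lt).1 this
        omega
      have hzo : orderOf z = p := by
        rcases (Nat.dvd_prime hpp).1 (orderOf_dvd_of_pow_eq_one hzp) with h1 | h1
        · exact absurd (orderOf_eq_one_iff.1 h1) hzne
        · exact h1
      set Z : Subgroup Q := zpowers z with hZ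
      have hcardZ : Nat.card ↥Z = p := by rw [hZ, Nat.card_zpowers, hzo]
      -- C Z via iso with exists_cyclic_p
      obtain ⟨Z₀, hGZ₀, hCZ₀, hcard₀⟩ := exists_cyclic_p hroot hper hp
      have hCZ : C ↥Z := hroot.1 Z₀ ↥Z (mulEquivOfPrimeCardEq hcard₀ hcardZ) hCZ₀
      -- quotient
      have hCquot : C (Q ⧸ Z) := by
        refine ih (Q ⧸ Z) inferInstance inferInstance (hpg.to_quotient Z) ?_
        have hmul : Nat.card Q = Nat.card (Q ⧸ Z) * Nat.card ↥Z :=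
          Subgroup.card_eq_card_quotient_mul_card_subgroup Z
        have hqpos : 0 < Nat.card (Q ⧸ Z) := Nat.card_pos
        rw [hcardZ] at hmul
        nlinarith [hpp.two_le]
      exact hroot.2.2.2.1 Q Z hCZ hCquot


/-- torsion of `AddCircle (1:ℚ)` is finite -/
lemma torsion_finite (n : ℕ) (hn : 0 < n) : {s : AddCircle (1:ℚ) | n • s = 0}.Finite := by
  haveI : Fact ((0:ℚ) < 1) := ⟨one_pos⟩
  have hsub : {s : AddCircle (1:ℚ) | n • s = 0} ⊆
      ⋃ d ∈ n.divisors, {s : AddCircle (1:ℚ) | addOrderOf s = d} := by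
    intro s hs
    have hdvd : addOrderOf s ∣ n := addOrderOf_dvd_of_nsmul_eq_zero hs
    exact Set.mem_biUnion (Nat.mem_divisors.2 ⟨hdvd, hn.ne'⟩) rfl
  refine Set.Finite.subset (Set.Finite.biUnion ((Set.finite_Iic n).subset (by
      intro d hd; exact Nat.le_of_dvd hn (Nat.mem_divisors.1 hd).1)) ?_) hsub
  intro d hd
  have hdpos : 0 < d := Nat.pos_of_mem_divisors hd
  have e := AddCircle.setAddOrderOfEquiv (1:ℚ) hdpos
  have hfin : {m : ℕ | m < d ∧ m.gcd d = 1}.Finite :=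
    (Set.finite_Iio d).subset (fun m hm => hm.1)
  rw [← Set.finite_coe_iff] at hfin ⊢
  exact Finite.of_equiv _ e.symm

/-- Key lemma: separating quotient which is a finite `p`-group. -/
lemma key_lemma (hroot : IsRootClass C) (hper : IsPeriodicClass C)
    (X : Type u) [CommGroup X] (hwb : WeaklyBounded (classPrimes C) X)
    (Y : Subgroup X) (hiso : IsolatedIn (classPrimes C) Y) (x : X) (hx : x ∉ Y) :
    ∃ p ∈ classPrimes C, ∃ K : Subgroup X, Y ≤ K ∧ x ∉ K ∧
      Finite (X ⧸ K) ∧ IsPGroup p (X ⧸ K) := by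
  classical
  -- roots of membership in a join
  have hroots : ∀ p : ℕ, x ∈ Y ⊔ zpowers (x ^ p) → ∃ k : ℤ, x ^ ((1:ℤ) - p * k) ∈ Y := by
    intro p hmem
    rw [Subgroup.mem_sup] at hmem
    obtain ⟨y, hy, z, hz, hyz⟩ := hmem
    obtain ⟨k, hk⟩ := Subgroup.mem_zpowers_iff.1 hz
    refine ⟨k, ?_⟩
    have hz' : z = x ^ ((p:ℤ) * k) := by rw [← hk, ← zpow_natCast x p, ← zpow_mul]
    have hyx : x ^ ((1:ℤ) - (p:ℤ)*k) = y := by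
      rw [zpow_sub, zpow_one, ← hz', ← hyz]; group
    rw [hyx]; exact hy
  -- Step A: find p ∈ 𝔓(C) with x ∉ Y ⊔ zpowers (x ^ p)
  obtain ⟨p, hpP, hA⟩ : ∃ p ∈ classPrimes C, x ∉ Y ⊔ zpowers (x ^ p) := by
    by_cases hS : ∃ n : ℕ, 0 < n ∧ x ^ n ∈ Y
    · set n := Nat.find hS with hn
      obtain ⟨hnpos, hnY⟩ := Nat.find_spec hS
      rw [← hn] at hnpos hnY
      have hmin : ∀ m, 0 < m → x ^ m ∈ Y → n ≤ m := fun m h1 h2 => Nat.find_min' hS ⟨h1, h2⟩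
      have hn1 : n ≠ 1 := by rintro h; rw [h, pow_one] at hnY; exact hx hnY
      set p := n.minFac with hpdef
      have hpp : p.Prime := Nat.minFac_prime hn1
      have hpd : p ∣ n := Nat.minFac_dvd n
      have hpP : p ∈ classPrimes C := by
        by_contra hcon
        have h1 : (x ^ (n / p)) ^ p ∈ Y := by
          rw [← pow_mul, Nat.div_mul_cancel hpd]; exact hnY
        have h2 : x ^ (n / p) ∈ Y := hiso _ p hpp hcon h1
        have h3 : 0 < n / p := Nat.div_pos (Nat.le_of_dvd hnpos hpd) hpp.pos
        have h4 := hmin _ h3 h2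
        have h5 : n / p < n := Nat.div_lt_self hnpos hpp.one_lt
        omega
      refine ⟨p, hpP, fun hmem => ?_⟩
      obtain ⟨k, hYz⟩ := hroots p hmem
      -- divisibility: n ∣ every exponent landing in Y
      have hdivY : ∀ j : ℤ, x ^ j ∈ Y → (n:ℤ) ∣ j := by
        intro j hj
        have hn0 : (0:ℤ) < n := by exact_mod_cast hnpos
        have h0 : 0 ≤ j % n := Int.emod_nonneg j hn0.ne'
        have hlt : j % n < n := Int.emod_lt_of_pos j hn0
        have hxr : x ^ (j % (n:ℤ)) ∈ Y := by
          have heq : x ^ (j % (n:ℤ)) = x ^ j * (x ^ ((n:ℤ) * (j / n)))⁻¹ := by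
            rw [← zpow_sub]; congr 1
            have := Int.emod_add_mul_ediv j n
            linarith
          rw [heq]
          refine Y.mul_mem hj (Y.inv_mem ?_)
          rw [zpow_mul, zpow_natCast]
          exact Subgroup.zpow_mem Y hnY _
        have hmod : j % n = 0 := by
          by_contra hne
          have hpos' : 0 < (j % (n:ℤ)).toNat := by omega
          have hmem' : x ^ ((j % (n:ℤ)).toNat) ∈ Y := by
            rw [← zpow_natCast, Int.toNat_of_nonneg h0]; exact hxr
          have := hmin _ hpos' hmem'
          omega
        exact Int.dvd_of_emod_eq_zero hmod
      have h1 : (n:ℤ) ∣ 1 - p*k := hdivY _ hYz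
      have h2 : (p:ℤ) ∣ (n:ℤ) := Int.natCast_dvd_natCast.2 hpd
      have h3 : (p:ℤ) ∣ 1 := by
        have h4 := h2.trans h1
        have h5 : (p:ℤ) ∣ (p:ℤ)*k := Dvd.intro k rfl
        have h6 := dvd_add h4 h5
        simpa using h6
      have h7 := Int.le_of_dvd one_pos h3
      have h8 : (2:ℤ) ≤ p := by exact_mod_cast hpp.two_le
      omega
    · push_neg at hS
      obtain ⟨p, hpP⟩ := classPrimes_nonempty hroot hper
      have hpp := hpP.1
      refine ⟨p, hpP, fun hmem => ?_⟩
      obtain ⟨k, hYz⟩ := hroots p hmem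
      have h8 : (2:ℤ) ≤ p := by exact_mod_cast hpp.two_le
      have hj0 : (1:ℤ) - p * k ≠ 0 := by
        intro h
        have h1 : (p:ℤ) ∣ 1 := ⟨k, by linarith⟩
        have := Int.le_of_dvd one_pos h1
        omega
      have hnat : x ^ (((1:ℤ) - p * k).natAbs) ∈ Y := by
        rcases Int.natAbs_eq ((1:ℤ) - p * k) with h | h
        · rw [← zpow_natCast, ← h]; exact hYz
        · rw [← zpow_natCast, show (((((1:ℤ) - p * k).natAbs) : ℤ)) = -((1:ℤ) - p*k) by omega,
            zpow_neg]
          exact Y.inv_mem hYz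
      exact hS _ (Int.natAbs_pos.2 hj0) hnat
  have hpp : p.Prime := hpP.1
  -- Step B
  set M : Subgroup X := Y ⊔ zpowers (x ^ p) with hM
  have hYM : Y ≤ M := le_sup_left
  have hxpM : x ^ p ∈ M := Subgroup.mem_sup_right (mem_zpowers _)
  obtain ⟨e, hepos, hbound⟩ := hwb M p hpP
  set m := e.factorization p with hm
  have hptor : ∀ z : X ⧸ M, ∀ k, z ^ p ^ k = 1 → z ^ p ^ m = 1 := by
    intro z k hz
    have he : z ^ e = 1 := hbound z ⟨k, hz⟩
    obtain ⟨j, hjk, hj⟩ := (Nat.dvd_prime_pow hpp).1 (orderOf_dvd_of_pow_eq_one hz)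
    have h2 : p ^ j ∣ e := hj ▸ orderOf_dvd_of_pow_eq_one he
    have h3 : j ≤ m := (Nat.Prime.pow_dvd_iff_le_factorization hpp hepos.ne').1 h2
    exact orderOf_dvd_iff_pow_eq_one.1 (by rw [hj]; exact pow_dvd_pow p h3)
  -- Step C
  set K₀ : Subgroup X := M ⊔ (powMonoidHom (p ^ (m+1)) : X →* X).range with hK₀
  have hpowK₀ : ∀ g : X, g ^ p ^ (m+1) ∈ K₀ :=
    fun g => Subgroup.mem_sup_right (MonoidHom.mem_range.2 ⟨g, rfl⟩)
  have hxK₀ : x ∉ K₀ := by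
    intro hmem
    rw [hK₀, Subgroup.mem_sup] at hmem
    obtain ⟨z, hz, w, hw, hzw⟩ := hmem
    obtain ⟨cc, hcc0⟩ := MonoidHom.mem_range.1 hw
    set π := QuotientGroup.mk' M with hπ
    have hker : ∀ g : X, π g = 1 ↔ g ∈ M := fun g => by
      rw [← MonoidHom.mem_ker, QuotientGroup.ker_mk']
    have hπx : π x ≠ 1 := fun h => hA ((hker x).1 h)
    have hcc : π x = (π cc) ^ (p ^ (m+1)) := by
      have h0 : π x = π z * π w := by rw [← map_mul, hzw]
      rw [h0, (hker z).2 hz, one_mul, ← hcc0]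
      show π (cc ^ (p ^ (m+1))) = (π cc) ^ (p ^ (m+1))
      rw [map_pow]
    have h2 : (π cc) ^ (p ^ (m+2)) = 1 := by
      have h1 : ((π cc) ^ (p ^ (m+1))) ^ p = 1 := by
        rw [← hcc, ← map_pow, (hker _).2 hxpM]
      rw [← pow_mul, ← pow_succ] at h1
      exact h1
    have h3 := hptor (π cc) (m+2) h2
    exact hπx (by rw [hcc, show p^(m+1) = p^m * p from pow_succ p m, pow_mul, h3, one_pow])
  -- Step D: character
  have hxB : ((x : X ⧸ K₀)) ≠ 1 := fun h => hxK₀ ((QuotientGroup.eq_one_iff x).1 h)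
  have hne0 : (Additive.ofMul ((x : X ⧸ K₀))) ≠ 0 := by
    simpa using hxB
  obtain ⟨c, hc⟩ := CharacterModule.exists_character_apply_ne_zero_of_ne_zero hne0
  set f : X →* Multiplicative (AddCircle (1:ℚ)) :=
    { toFun := fun g => Multiplicative.ofAdd (c (Additive.ofMul ((g : X ⧸ K₀)))),
      map_one' := by simp,
      map_mul' := fun a b => by
        show Multiplicative.ofAdd (c (Additive.ofMul (((a*b : X) : X ⧸ K₀)))) = _
        rw [show (((a*b : X) : X ⧸ K₀)) = ((a : X ⧸ K₀)) * ((b : X ⧸ K₀)) from rfl]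
        rw [show Additive.ofMul (((a : X ⧸ K₀)) * ((b : X ⧸ K₀)))
            = Additive.ofMul ((a : X ⧸ K₀)) + Additive.ofMul ((b : X ⧸ K₀)) from rfl]
        rw [map_add]
        rfl } with hf
  have hfval : ∀ g : X, f g = Multiplicative.ofAdd (c (Additive.ofMul ((g : X ⧸ K₀)))) :=
    fun g => rfl
  have hK₀ker : ∀ g : X, g ∈ K₀ → f g = 1 := by
    intro g hg
    rw [hfval, (QuotientGroup.eq_one_iff g).2 hg]
    show Multiplicative.ofAdd (c 0) = 1
    rw [map_zero]; rfl
  refine ⟨p, hpP, f.ker, ?_, ?_, ?_, ?_⟩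
  · intro y hy
    exact hK₀ker y (Subgroup.mem_sup_left (hYM hy))
  · intro hmem
    apply hc
    have h1 : f x = 1 := hmem
    rw [hfval] at h1
    exact Multiplicative.ofAdd.injective (by simpa using h1)
  · -- Finite
    have hNpos : 0 < p ^ (m+1) := pow_pos hpp.pos _
    have hsub : (f.range : Set (Multiplicative (AddCircle (1:ℚ)))) ⊆
        Multiplicative.toAdd ⁻¹' {s : AddCircle (1:ℚ) | (p ^ (m+1)) • s = 0} := by
      rintro t ⟨g, rfl⟩
      show (p ^ (m+1)) • (Multiplicative.toAdd (f g)) = 0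
      have h1 : f (g ^ p ^ (m+1)) = 1 := hK₀ker _ (hpowK₀ g)
      rw [map_pow] at h1
      have := congrArg Multiplicative.toAdd h1
      simpa using this
    have hfin : (Multiplicative.toAdd ⁻¹'
        {s : AddCircle (1:ℚ) | (p ^ (m+1)) • s = 0}).Finite :=
      Set.Finite.preimage (Multiplicative.toAdd.injective.injOn)
        (torsion_finite _ hNpos)
    have hfr : Finite ↥f.range := (hfin.subset hsub).to_subtype
    exact Finite.of_equiv _ (QuotientGroup.quotientKerEquivRange f).symm.toEquiv
  · intro q
    obtain ⟨g, rfl⟩ := QuotientGroup.mk'_surjective f.ker q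
    refine ⟨m+1, ?_⟩
    rw [← map_pow]
    have : g ^ p ^ (m+1) ∈ f.ker := hK₀ker _ (hpowK₀ g)
    rwa [← MonoidHom.mem_ker, QuotientGroup.ker_mk']

end Helpers


/-- Theorem 1.1(2): a weakly `C`-bounded abelian group has the properties
`C`-Sep and `𝒫`-Sep, i.e. every `𝔓(C)′`-isolated subgroup is separable both by `C` and by
the class of finite `p`-groups with `p ∈ 𝔓(C)`. -/
theorem statement1 (C : GroupClass.{u}) (hroot : IsRootClass C) (hper : IsPeriodicClass C)
    (X : Type u) [CommGroup X] (hwb : WeaklyBounded (classPrimes C) X) :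
    HasSepProp C X ∧
    ∀ Y : Subgroup X, IsolatedIn (classPrimes C) Y → SeparableIn (FinPClass C) Y := by
  have main : ∀ Y : Subgroup X, IsolatedIn (classPrimes C) Y → ∀ x : X, x ∉ Y →
      ∃ p ∈ classPrimes C, ∃ K : Subgroup X, Y ≤ K ∧ x ∉ K ∧
        Finite (X ⧸ K) ∧ IsPGroup p (X ⧸ K) :=
    fun Y hY x hx => key_lemma hroot hper X hwb Y hY x hx
  have build : ∀ (Y : Subgroup X) (K : Subgroup X), Y ≤ K → ∀ x : X, x ∉ K →
      (QuotientGroup.mk' K) x ∉ Y.map (QuotientGroup.mk' K) := by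
    intro Y K hYK x hxK hmem
    obtain ⟨y, hy, hxy⟩ := Subgroup.mem_map.1 hmem
    rw [QuotientGroup.mk'_apply, QuotientGroup.mk'_apply, QuotientGroup.eq] at hxy
    have := K.mul_mem (hYK hy) hxy
    rw [mul_inv_cancel_left] at this
    exact hxK this
  constructor
  · intro Y hY x hx
    obtain ⟨p, hp, K, hYK, hxK, hfin, hpg⟩ := main Y hY x hx
    exact ⟨X ⧸ K, inferInstance, QuotientGroup.mk' K,
      pgroup_mem hroot hper hp (Nat.card (X ⧸ K)) (X ⧸ K) inferInstance hfin hpg le_rfl,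
      QuotientGroup.mk'_surjective K, build Y K hYK x hxK⟩
  · intro Y hY x hx
    obtain ⟨p, hp, K, hYK, hxK, hfin, hpg⟩ := main Y hY x hx
    exact ⟨X ⧸ K, inferInstance, QuotientGroup.mk' K, ⟨p, hp, hfin, hpg⟩,
      QuotientGroup.mk'_surjective K, build Y K hYK x hxK⟩

end Paper
end

section
/- Let 𝒞 be a root class of groups, let X be a non-trivial 𝒞-group, and let 𝔠 be the cardinality of X. Then: (1) if 𝒞 contains at least one non-periodic group, then 𝒞 contains every free solvable group whose cardinality does not exceed 2^𝔠; (2) if 𝒞 consists only of periodic groups, then 𝒞 contains every periodic solvable 𝔓(𝒞)-group of finite exponent whose cardinality does not exceed 2^𝔠. -/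
universe u

namespace Paper

/-- A `MulEquiv` between two subsingleton groups. -/
def mulEquivOfSubsingleton {A : Type*} {B : Type*} [Group A] [Group B]
    [Subsingleton A] [Subsingleton B] : A ≃* B where
  toFun _ := 1
  invFun _ := 1
  left_inv _ := Subsingleton.elim _ _
  right_inv _ := Subsingleton.elim _ _
  map_mul' _ _ := Subsingleton.elim _ _

section Aux

variable {C : GroupClass.{u}} (hroot : IsRootClass C)

include hroot

/-- closure under embeddings -/
theorem embed_mem {A B : Type u} [Group A] [Group B] (hB : C B) (f : A →* B)
    (hf : Function.Injective f) : C A := by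
  obtain ⟨hiso, -, hsub, -, -⟩ := hroot
  have h1 : C f.range := hsub B hB f.range
  have e : A ≃* f.range := MulEquiv.ofBijective f.rangeRestrict
    ⟨fun a b h => hf (congrArg Subtype.val h), f.rangeRestrict_surjective⟩
  exact hiso _ _ e.symm h1

theorem triv_mem (T : Type u) [Group T] [Subsingleton T] : C T := by
  obtain ⟨G₀, _, hG₀, -⟩ := hroot.2.1
  exact embed_mem hroot hG₀ (1 : T →* G₀) (fun a b _ => Subsingleton.elim a b)

/-- arbitrarily large groups in `C` -/
theorem bigW (X : Type u) [Group X] (hX : C X) (hnt : Nontrivial X) (κ : Cardinal.{u})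
    (hκ : κ < Cardinal.aleph0 ∨ κ ≤ (2 : Cardinal) ^ ((2 : Cardinal) ^ Cardinal.mk X)) :
    ∃ (W : Type u) (_ : Group W), C W ∧ κ ≤ Cardinal.mk W := by
  obtain ⟨hiso, -, hsub, hext, hprod⟩ := hroot
  have h2 : (2 : Cardinal) ≤ Cardinal.mk X := by
    rw [Cardinal.two_le_iff]; obtain ⟨x, y, h⟩ := hnt; exact ⟨x, y, h⟩
  have claim : ∀ n : ℕ, ∃ (W : Type u) (_ : Group W), C W ∧ (n : Cardinal) ≤ Cardinal.mk W := by
    intro n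
    induction n with
    | zero => exact ⟨X, ‹_›, hX, by simp⟩
    | succ n ih =>
      obtain ⟨W, iW, hW, hn⟩ := ih
      refine ⟨W → X, inferInstance, hprod X W hX hW, ?_⟩
      have hlt : (n : Cardinal) < Cardinal.mk (W → X) := by
        refine lt_of_le_of_lt hn ?_
        calc Cardinal.mk W < 2 ^ Cardinal.mk W := Cardinal.cantor _
        _ ≤ Cardinal.mk X ^ Cardinal.mk W := Cardinal.power_le_power_right h2
        _ = Cardinal.mk (W → X) := Cardinal.power_def X W
      have : ((n : Cardinal) + 1) ≤ Cardinal.mk (W → X) :=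
        (Cardinal.add_one_le_succ _).trans (Order.succ_le_of_lt hlt)
      simpa using this
  rcases lt_or_ge κ Cardinal.aleph0 with hfin | hinf
  · obtain ⟨n, rfl⟩ := Cardinal.lt_aleph0.mp hfin
    exact claim n
  · rcases hκ with hκ | hκ
    · exact absurd hκ (not_lt.mpr hinf)
    · have hXinf : Cardinal.aleph0 ≤ Cardinal.mk X := by
        by_contra h
        push_neg at h
        have h1 : (2 : Cardinal) ^ Cardinal.mk X < Cardinal.aleph0 :=
          Cardinal.power_lt_aleph0 (by exact_mod_cast Cardinal.nat_lt_aleph0 2) h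
        have h2' : (2 : Cardinal) ^ ((2:Cardinal) ^ Cardinal.mk X) < Cardinal.aleph0 :=
          Cardinal.power_lt_aleph0 (by exact_mod_cast Cardinal.nat_lt_aleph0 2) h1
        exact absurd (lt_of_le_of_lt (hinf.trans hκ) h2') (lt_irrefl _)
      refine ⟨(X → X) → X, inferInstance, hprod X (X → X) hX (hprod X X hX hX), ?_⟩
      refine hκ.trans ?_
      calc (2 : Cardinal) ^ ((2:Cardinal) ^ Cardinal.mk X)
          ≤ 2 ^ (Cardinal.mk (X → X)) := by
            refine Cardinal.power_le_power_left (by norm_num) ?_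
            calc (2:Cardinal) ^ Cardinal.mk X ≤ Cardinal.mk X ^ Cardinal.mk X :=
              Cardinal.power_le_power_right h2
            _ = Cardinal.mk (X → X) := Cardinal.power_def X X
        _ ≤ Cardinal.mk X ^ (Cardinal.mk (X → X)) := Cardinal.power_le_power_right h2
        _ = Cardinal.mk ((X → X) → X) := Cardinal.power_def X (X → X)

end Aux

open Classical in
/-- the `P`-part of a natural number -/
noncomputable def pPart (P : Set ℕ) (e : ℕ) : ℕ :=
  ∏ p ∈ e.primeFactors.filter (· ∈ P), p ^ e.factorization p

theorem pPart_pos (P : Set ℕ) (e : ℕ) : 0 < pPart P e := by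
  classical
  refine Finset.prod_pos ?_
  intro p hp
  have hp' : p.Prime := Nat.prime_of_mem_primeFactors (Finset.mem_filter.mp hp).1
  exact pow_pos hp'.pos _

theorem pPart_dvd (P : Set ℕ) {e : ℕ} (he : e ≠ 0) : pPart P e ∣ e := by
  classical
  conv_rhs => rw [← Nat.factorization_prod_pow_eq_self he]
  rw [Nat.factorization_prod_pow_eq_self he]  -- no-op to keep shape
  have : e.factorization.prod (· ^ ·) = ∏ p ∈ e.primeFactors, p ^ e.factorization p := by
    rw [Finsupp.prod]; rw [Nat.support_factorization]
  conv_rhs => rw [← Nat.factorization_prod_pow_eq_self he, this]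
  exact Finset.prod_dvd_prod_of_subset _ _ _ (Finset.filter_subset _ _)

theorem pPart_primes (P : Set ℕ) (e : ℕ) {q : ℕ} (hq : q.Prime) (hdvd : q ∣ pPart P e) :
    q ∈ P := by
  classical
  obtain ⟨p, hp, hqp⟩ := hq.prime.exists_mem_finset_dvd hdvd
  obtain ⟨hp1, hp2⟩ := Finset.mem_filter.mp hp
  have : q = p := (Nat.prime_dvd_prime_iff_eq hq (Nat.prime_of_mem_primeFactors hp1)).mp
    (hq.dvd_of_dvd_pow hqp)
  simpa [this] using hp2

theorem dvd_pPart (P : Set ℕ) {e d : ℕ} (he : e ≠ 0) (hdvd : d ∣ e)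
    (h : ∀ p : ℕ, p.Prime → p ∣ d → p ∈ P) : d ∣ pPart P e := by
  classical
  have hd0 : d ≠ 0 := fun h0 => he (by simpa [h0] using hdvd)
  have hfac : d = ∏ p ∈ d.primeFactors, p ^ d.factorization p := by
    conv_lhs => rw [← Nat.factorization_prod_pow_eq_self hd0]
    rw [Finsupp.prod, Nat.support_factorization]
  have hle : d.factorization ≤ e.factorization :=
    (Nat.factorization_le_iff_dvd hd0 he).mpr hdvd
  have hsub : d.primeFactors ⊆ e.primeFactors.filter (· ∈ P) := by
    intro p hp
    obtain ⟨hprime, hpd, -⟩ := Nat.mem_primeFactors.mp hp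
    exact Finset.mem_filter.mpr ⟨Nat.mem_primeFactors.mpr ⟨hprime, hpd.trans hdvd, he⟩,
      h p hprime hpd⟩
  calc d = ∏ p ∈ d.primeFactors, p ^ d.factorization p := hfac
    _ ∣ ∏ p ∈ d.primeFactors, p ^ e.factorization p :=
        Finset.prod_dvd_prod_of_dvd _ _ (fun p _ => pow_dvd_pow p (hle p))
    _ ∣ ∏ p ∈ e.primeFactors.filter (· ∈ P), p ^ e.factorization p :=
        Finset.prod_dvd_prod_of_subset _ _ _ hsub
    _ = pPart P e := rfl



/-- The canonical embedding of `ZMod n` into `ℚ/ℤ`, hitting exactly the `n`-torsion. -/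
noncomputable def zmodToCircle (n : ℕ) : ZMod n →+ AddCircle (1 : ℚ) :=
  ZMod.lift n ⟨zmultiplesHom _ (((n : ℚ)⁻¹ : ℚ) : AddCircle (1 : ℚ)), by
    show (n : ℤ) • (((n : ℚ)⁻¹ : ℚ) : AddCircle (1 : ℚ)) = 0
    have : ((n : ℤ) • ((n : ℚ)⁻¹ : ℚ) : ℚ) = (n : ℚ) * (n : ℚ)⁻¹ := by
      rw [zsmul_eq_mul]; push_cast; ring
    rcases eq_or_ne (n : ℚ) 0 with h | h
    · rw [← QuotientAddGroup.mk_zsmul, this, h, zero_mul]; rfl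
    · rw [← QuotientAddGroup.mk_zsmul, this, mul_inv_cancel₀ h]
      exact AddCircle.coe_period (1 : ℚ)⟩

theorem zmodToCircle_intCast (n : ℕ) (z : ℤ) :
    zmodToCircle n ((z : ZMod n)) = ((z • (n : ℚ)⁻¹ : ℚ) : AddCircle (1 : ℚ)) := by
  rw [zmodToCircle, ZMod.lift_coe]
  rfl

theorem zmodToCircle_injective (n : ℕ) (hn : n ≠ 0) : Function.Injective (zmodToCircle n) := by
  rw [injective_iff_map_eq_zero]
  intro k hk
  obtain ⟨z, rfl⟩ := ZMod.intCast_surjective k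
  rw [zmodToCircle_intCast, AddCircle.coe_eq_zero_iff] at hk
  obtain ⟨w, hw⟩ := hk
  have hq : (w : ℚ) = z * (n : ℚ)⁻¹ := by
    have := hw
    push_cast at this ⊢
    simpa [zsmul_eq_mul] using this
  have hn' : (n : ℚ) ≠ 0 := Nat.cast_ne_zero.mpr hn
  have hz : (z : ℚ) = w * n := by
    field_simp at hq
    linarith [hq]
  have hzint : z = w * n := by exact_mod_cast hz
  rw [ZMod.intCast_zmod_eq_zero_iff_dvd]
  exact ⟨w, by rw [hzint]; ring⟩

theorem zmodToCircle_surjOn (n : ℕ) (hn : n ≠ 0) (q : AddCircle (1 : ℚ))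
    (hq : (n : ℤ) • q = 0) : ∃ k : ZMod n, zmodToCircle n k = q := by
  obtain ⟨x, rfl⟩ := QuotientAddGroup.mk_surjective q
  rw [← QuotientAddGroup.mk_zsmul, AddCircle.coe_eq_zero_iff] at hq
  obtain ⟨w, hw⟩ := hq
  have hn' : (n : ℚ) ≠ 0 := Nat.cast_ne_zero.mpr hn
  have hx : x = w * (n : ℚ)⁻¹ := by
    have : (w : ℚ) = n * x := by push_cast at hw ⊢; simpa [zsmul_eq_mul] using hw
    field_simp
    linarith [this]
  refine ⟨(w : ZMod n), ?_⟩
  rw [zmodToCircle_intCast, hx]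
  norm_num [zsmul_eq_mul]


section Cyclic

variable {C : GroupClass.{u}} (hroot : IsRootClass C)

include hroot

/-- `C` contains a cyclic group of order `p` for each `p ∈ 𝔓(C)` (when `C` is periodic). -/
theorem prime_cyclic_mem (hper : IsPeriodicClass C) {p : ℕ} (hp : p ∈ classPrimes C) :
    ∃ (K : Type u) (_ : Group K), C K ∧ IsCyclic K ∧ Nat.card K = p := by
  obtain ⟨hprime, G', _, hCG', g, hdvd⟩ := hp
  obtain ⟨hiso, -, hsub, -, -⟩ := hroot
  have hfin : IsOfFinOrder g := hper G' hCG' g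
  have hn₀ : orderOf g ≠ 0 := (hfin.orderOf_pos).ne'
  set h₁ := g ^ (orderOf g / p) with hh₁
  have hne : orderOf g / p ≠ 0 :=
    (Nat.div_pos (Nat.le_of_dvd hfin.orderOf_pos hdvd) hprime.pos).ne'
  have hord : orderOf h₁ = p := by
    rw [hh₁, orderOf_pow' g hne, Nat.gcd_eq_right (Nat.div_dvd_of_dvd hdvd),
      Nat.div_div_self hdvd hn₀]
  refine ⟨↥(Subgroup.zpowers h₁), inferInstance, hsub G' hCG' _, ?_, ?_⟩
  · refine ⟨⟨⟨h₁, Subgroup.mem_zpowers h₁⟩, ?_⟩⟩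
    rintro ⟨x, hx⟩
    obtain ⟨k, hk⟩ := Subgroup.mem_zpowers_iff.mp hx
    exact Subgroup.mem_zpowers_iff.mpr ⟨k, Subtype.ext (by simpa using hk)⟩
  · rw [Nat.card_zpowers, hord]

/-- `C` contains a cyclic group of order `e` for every `𝔓(C)`-number `e`. -/
theorem cyclic_mem (hper : IsPeriodicClass C) :
    ∀ e : ℕ, 0 < e → (∀ p : ℕ, p.Prime → p ∣ e → p ∈ classPrimes C) →
    ∃ (E : Type u) (_ : Group E), C E ∧ Nonempty (E ≃* Multiplicative (ZMod e)) := by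
  intro e
  induction e using Nat.strong_induction_on with
  | _ e ih =>
  intro he hprimes
  rcases eq_or_lt_of_le (Nat.one_le_iff_ne_zero.mpr he.ne') with h1 | h1
  · -- e = 1
    have e1 : e = 1 := h1.symm
    subst e1
    refine ⟨ULift (Multiplicative (ZMod 1)), inferInstance, ?_, ⟨MulEquiv.ulift⟩⟩
    exact triv_mem hroot _
  · -- e ≥ 2
    obtain ⟨hiso, hwit, hsub, hext, hprod⟩ := hroot
    haveI : NeZero e := ⟨he.ne'⟩
    set p := e.minFac with hp
    have hprime : p.Prime := Nat.minFac_prime (by omega)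
    have hpdvd : p ∣ e := Nat.minFac_dvd e
    set m := e / p with hm
    have hmdvd : m ∣ e := Nat.div_dvd_of_dvd hpdvd
    have hmpos : 0 < m := Nat.div_pos (Nat.minFac_le he) hprime.pos
    have hem : p * m = e := Nat.mul_div_cancel' hpdvd
    have hmlt : m < e := Nat.div_lt_self he hprime.one_lt
    obtain ⟨Em, _, hEm, ⟨isoEm⟩⟩ := ih m hmlt hmpos
      (fun q hq hqd => hprimes q hq (hqd.trans hmdvd))
    haveI : NeZero m := ⟨hmpos.ne'⟩
    set G : Type u := ULift.{u} (Multiplicative (ZMod e)) with hG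
    let ρ : ZMod e →+* ZMod m := ZMod.castHom hmdvd (ZMod m)
    let π : G →* Multiplicative (ZMod m) :=
      { toFun := fun x => Multiplicative.ofAdd (ρ x.down.toAdd)
        map_one' := by simp
        map_mul' := fun a b => by
          simp only [← ofAdd_add, ← map_add]
          rfl }
    have hπs : Function.Surjective π := by
      intro y
      obtain ⟨x, hx⟩ := ZMod.ringHom_surjective ρ y.toAdd
      exact ⟨ULift.up (Multiplicative.ofAdd x), by
        show Multiplicative.ofAdd (ρ x) = y
        rw [hx]; rfl⟩
    -- cardinalities
    have hcardG : Nat.card G = e := by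
      rw [Nat.card_congr (Equiv.ulift.trans Multiplicative.toAdd), Nat.card_zmod]
    have hcardQ : Nat.card (G ⧸ π.ker) = m := by
      rw [Nat.card_congr (QuotientGroup.quotientKerEquivOfSurjective π hπs).toEquiv,
        Nat.card_congr Multiplicative.toAdd, Nat.card_zmod]
    have hcardN : Nat.card π.ker = p := by
      have := Subgroup.card_eq_card_quotient_mul_card_subgroup π.ker
      rw [hcardG, hcardQ] at this
      have : m * Nat.card π.ker = m * p := by rw [← this, ← hem, Nat.mul_comm]
      exact Nat.eq_of_mul_eq_mul_left hmpos this
    -- cyclicity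
    haveI : IsCyclic G :=
      isCyclic_of_surjective (MulEquiv.ulift.symm : Multiplicative (ZMod e) ≃* G).toMonoidHom
        (MulEquiv.ulift.symm).surjective
    haveI : IsCyclic ↥π.ker := Subgroup.isCyclic π.ker
    obtain ⟨K, _, hK, hKcyc, hKcard⟩ := prime_cyclic_mem
      ⟨hiso, hwit, hsub, hext, hprod⟩ hper (hprimes p hprime hpdvd)
    haveI := hKcyc
    have hNiso : K ≃* ↥π.ker := mulEquivOfCyclicCardEq (by rw [hKcard, hcardN])
    have hCN : C ↥π.ker := hiso K _ hNiso hK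
    have hCQ : C (G ⧸ π.ker) := hiso Em _
      (isoEm.trans (QuotientGroup.quotientKerEquivOfSurjective π hπs).symm) hEm
    have hCG : C G := hext G π.ker hCN hCQ
    exact ⟨G, inferInstance, hCG, ⟨MulEquiv.ulift⟩⟩

end Cyclic

end Paper

namespace Paper

section Abelian

variable {C : GroupClass.{u}} (hroot : IsRootClass C)

include hroot

theorem abelian_mem (hper : IsPeriodicClass C) (X : Type u) [Group X] (hX : C X)
    (hnt : Nontrivial X) (A : Type u) [CommGroup A] (e : ℕ) (he : 0 < e)
    (hexp : ∀ a : A, a ^ e = 1)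
    (hordp : ∀ a : A, ∀ p : ℕ, p.Prime → p ∣ orderOf a → p ∈ classPrimes C)
    (hcard : Cardinal.mk A ≤ 2 ^ Cardinal.mk X) : C A := by
  classical
  by_cases hA : Subsingleton A
  · exact triv_mem hroot A
  set P := classPrimes C with hP
  set e' := pPart P e with he'def
  have he'pos : 0 < e' := pPart_pos P e
  haveI : NeZero e' := ⟨he'pos.ne'⟩
  have hord : ∀ a : A, orderOf a ∣ e' := fun a =>
    dvd_pPart P he.ne' (orderOf_dvd_of_pow_eq_one (hexp a)) (fun p hp hpd => hordp a p hp hpd)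
  set I := (Additive A →+ ZMod e') with hI
  set ψ := zmodToCircle e' with hψ
  have hψinj := zmodToCircle_injective e' he'pos.ne'
  -- separation of points by `ZMod e'`-valued characters
  have sep : ∀ a : A, a ≠ 1 → ∃ c : I, c (Additive.ofMul a) ≠ 0 := by
    intro a ha
    have ha' : (Additive.ofMul a : Additive A) ≠ 0 := ha
    obtain ⟨χ, hχ⟩ := CharacterModule.exists_character_apply_ne_zero_of_ne_zero ha'
    have htor : ∀ x : Additive A, (e' : ℤ) • (χ x) = 0 := by
      intro x
      have hx : (e' : ℤ) • x = 0 := by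
        apply Additive.toMul.injective
        show ((e' : ℤ) • x).toMul = (0 : Additive A).toMul
        rw [toMul_zsmul, zpow_natCast]
        exact orderOf_dvd_iff_pow_eq_one.mp (hord x.toMul)
      rw [← map_zsmul χ (e' : ℤ) x, hx, map_zero]
    let χ' : Additive A →+ ψ.range := AddMonoidHom.codRestrict χ ψ.range (fun x => by
      obtain ⟨k, hk⟩ := zmodToCircle_surjOn e' he'pos.ne' (χ x) (htor x)
      exact ⟨k, hk⟩)
    let ψe : ZMod e' ≃+ ψ.range := AddEquiv.ofBijective ψ.rangeRestrict
      ⟨fun a b h => hψinj (congrArg Subtype.val h), ψ.rangeRestrict_surjective⟩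
    refine ⟨(ψe.symm.toAddMonoidHom).comp χ', ?_⟩
    intro h0
    apply hχ
    have h1 : χ' (Additive.ofMul a) = 0 := by
      have h2 : (ψe.symm) (χ' (Additive.ofMul a)) = 0 := h0
      have h3 := congrArg ψe h2
      rwa [AddEquiv.apply_symm_apply, map_zero] at h3
    exact congrArg Subtype.val h1
  -- cardinality bound and big group
  have hIemb : Cardinal.mk I ≤ Cardinal.mk (A → ULift.{u} (ZMod e')) :=
    Cardinal.mk_le_of_injective
      (f := fun (c : I) (a : A) => ULift.up.{u} (c (Additive.ofMul a)))
      (fun c c' h => AddMonoidHom.ext (fun x =>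
        congrArg ULift.down (congrFun h x.toMul)))
  have hWex : ∃ (W : Type u) (_ : Group W), C W ∧ Cardinal.mk I ≤ Cardinal.mk W := by
    rcases lt_or_ge (Cardinal.mk A) Cardinal.aleph0 with hfin | hinf
    · haveI : Finite A := Cardinal.lt_aleph0_iff_finite.mp hfin
      have hflt : Cardinal.mk I < Cardinal.aleph0 := by
        refine lt_of_le_of_lt hIemb ?_
        rw [← Cardinal.power_def]
        exact Cardinal.power_lt_aleph0
          (Cardinal.lt_aleph0_iff_finite.mpr inferInstance) hfin
      exact bigW hroot X hX hnt _ (Or.inl hflt)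
    · have hbound : Cardinal.mk I ≤ (2 : Cardinal) ^ ((2 : Cardinal) ^ Cardinal.mk X) := by
        have h2 : Cardinal.mk (ULift.{u} (ZMod e')) ≤ Cardinal.aleph0 := Cardinal.mk_le_aleph0
        have h3 : Cardinal.aleph0 ≤ (2 : Cardinal) ^ Cardinal.mk A :=
          hinf.trans (Cardinal.cantor _).le
        calc Cardinal.mk I ≤ Cardinal.mk (A → ULift.{u} (ZMod e')) := hIemb
          _ = Cardinal.mk (ULift.{u} (ZMod e')) ^ Cardinal.mk A := (Cardinal.power_def _ _).symm
          _ ≤ ((2 : Cardinal) ^ Cardinal.mk A) ^ Cardinal.mk A :=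
              Cardinal.power_le_power_right (h2.trans h3)
          _ = (2 : Cardinal) ^ (Cardinal.mk A * Cardinal.mk A) := (Cardinal.power_mul).symm
          _ = (2 : Cardinal) ^ Cardinal.mk A := by rw [Cardinal.mul_eq_self hinf]
          _ ≤ (2 : Cardinal) ^ ((2 : Cardinal) ^ Cardinal.mk X) :=
              Cardinal.power_le_power_left (by norm_num) hcard
      exact bigW hroot X hX hnt _ (Or.inr hbound)
  obtain ⟨W, _, hW, hle⟩ := hWex
  obtain ⟨E, _, hE, ⟨η⟩⟩ := cyclic_mem hroot hper e' he'pos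
    (fun p hp hpd => pPart_primes P e hp hpd)
  obtain ⟨emb⟩ := (Cardinal.le_def _ _).mp hle
  haveI : Nonempty I := ⟨0⟩
  set r : W → I := Function.invFun emb with hrdef
  have hr : ∀ c : I, r (emb c) = c := fun c => Function.leftInverse_invFun emb.injective c
  let Φ : A →* (W → E) := MonoidHom.mk'
    (fun a w => η.symm (Multiplicative.ofAdd ((r w) (Additive.ofMul a))))
    (by
      intro a b
      funext w
      show η.symm (Multiplicative.ofAdd ((r w) (Additive.ofMul (a * b)))) = _
      rw [show Additive.ofMul (a * b) = Additive.ofMul a + Additive.ofMul b from rfl,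
        map_add, ofAdd_add, map_mul]
      rfl)
  have hΦinj : Function.Injective Φ := by
    rw [injective_iff_map_eq_one]
    intro a ha
    by_contra h
    obtain ⟨c, hc⟩ := sep a h
    have hev := congrFun ha (emb c)
    apply hc
    have h1 : η.symm (Multiplicative.ofAdd ((r (emb c)) (Additive.ofMul a))) = 1 := hev
    rw [hr c] at h1
    have h2 : Multiplicative.ofAdd (c (Additive.ofMul a)) = 1 := by
      apply η.symm.injective
      rw [h1, map_one]
    exact ofAdd_eq_one.mp h2
  exact embed_mem hroot (hroot.2.2.2.2 E W hE hW) Φ hΦinj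

end Abelian

end Paper

namespace Paper

section Solvable

variable {C : GroupClass.{u}} (hroot : IsRootClass C)

include hroot

open commutatorElement in
theorem solvable_mem (hper : IsPeriodicClass C) (X : Type u) [Group X] (hX : C X)
    (hnt : Nontrivial X) :
    ∀ (n : ℕ) (S : Type u) (_ : Group S),
      derivedSeries S n = ⊥ →
      (∀ s : S, ∀ p : ℕ, p.Prime → p ∣ orderOf s → p ∈ classPrimes C) →
      (∃ e : ℕ, 0 < e ∧ ∀ s : S, s ^ e = 1) →
      Cardinal.mk S ≤ 2 ^ Cardinal.mk X → C S := by
  intro n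
  induction n with
  | zero =>
    intro S _ hbot _ _ _
    rw [derivedSeries_zero] at hbot
    haveI : Subsingleton S := by
      constructor
      intro a b
      have ha : a ∈ (⊥ : Subgroup S) := hbot ▸ Subgroup.mem_top a
      have hb : b ∈ (⊥ : Subgroup S) := hbot ▸ Subgroup.mem_top b
      rw [Subgroup.mem_bot] at ha hb
      rw [ha, hb]
    exact triv_mem hroot S
  | succ n ih =>
    intro S _ hbot hprimes hexp hcard
    obtain ⟨e, he, hexp⟩ := hexp
    set N := derivedSeries S n with hN
    haveI : N.Normal := derivedSeries_normal S n
    -- the subgroup N is abelian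
    have hcomm : ∀ x y : ↥N, x * y = y * x := by
      intro x y
      have hc : ⁅(x : S), (y : S)⁆ ∈ derivedSeries S (n + 1) := by
        rw [derivedSeries_succ]
        exact Subgroup.commutator_mem_commutator x.2 y.2
      rw [hbot, Subgroup.mem_bot] at hc
      exact Subtype.ext (commutatorElement_eq_one_iff_mul_comm.mp hc)
    letI : CommGroup ↥N := { (inferInstance : Group ↥N) with mul_comm := hcomm }
    have hCN : C ↥N := by
      refine abelian_mem hroot hper X hX hnt ↥N e he ?_ ?_ ?_
      · intro a
        exact Subtype.ext (by rw [SubmonoidClass.coe_pow]; exact hexp (a : S))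
      · intro a p hp hpd
        refine hprimes (a : S) p hp ?_
        rwa [← orderOf_injective N.subtype N.subtype_injective a] at hpd
      · exact (Cardinal.mk_le_of_injective N.subtype_injective).trans hcard
    have hCQ : C (S ⧸ N) := by
      refine ih (S ⧸ N) inferInstance ?_ ?_ ⟨e, he, ?_⟩ ?_
      · rw [← map_derivedSeries_eq (QuotientGroup.mk'_surjective N) n]
        rw [Subgroup.map_eq_bot_iff, ← hN, QuotientGroup.ker_mk']
      · intro sq p hp hpd
        obtain ⟨s, rfl⟩ := QuotientGroup.mk'_surjective N sq
        exact hprimes s p hp (hpd.trans (orderOf_map_dvd (QuotientGroup.mk' N) s))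
      · intro sq
        obtain ⟨s, rfl⟩ := QuotientGroup.mk'_surjective N sq
        rw [← map_pow]
        rw [hexp s, map_one]
      · exact (Cardinal.mk_le_of_surjective (QuotientGroup.mk'_surjective N)).trans hcard
    exact hroot.2.2.2.1 S N hCN hCQ

end Solvable

end Paper

namespace Paper

section FreeSolvable

variable {C : GroupClass.{u}} (hroot : IsRootClass C)

include hroot

/-- If `C` contains a non-periodic group, it contains an infinite cyclic group. -/
theorem int_mem (hnp : ∃ (G : Type u) (_ : Group G), C G ∧ ¬ Monoid.IsTorsion G) :
    ∃ (Z : Type u) (_ : Group Z), C Z ∧ Nonempty (Multiplicative ℤ ≃* Z) := by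
  obtain ⟨G₁, _, hG₁, hnt⟩ := hnp
  rw [Monoid.IsTorsion] at hnt
  rw [IsMulTorsion] at hnt; push_neg at hnt
  obtain ⟨g, hg⟩ := hnt
  refine ⟨↥(Subgroup.zpowers g), inferInstance, hroot.2.2.1 G₁ hG₁ _, ?_⟩
  let g' : ↥(Subgroup.zpowers g) := ⟨g, Subgroup.mem_zpowers g⟩
  let ζ : Multiplicative ℤ →* ↥(Subgroup.zpowers g) := zpowersHom _ g'
  have hinj : Function.Injective ζ := by
    intro a b hab
    have h1 : g ^ (a.toAdd) = g ^ (b.toAdd) := congrArg Subtype.val hab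
    have := injective_zpow_iff_not_isOfFinOrder.mpr hg h1
    exact Multiplicative.toAdd.injective this
  have hsurj : Function.Surjective ζ := by
    rintro ⟨x, k, rfl⟩
    exact ⟨Multiplicative.ofAdd k, Subtype.ext rfl⟩
  exact ⟨MulEquiv.ofBijective ζ ⟨hinj, hsurj⟩⟩

theorem freeSolvable_mem (X : Type u) [Group X] (hX : C X) (hnt : Nontrivial X)
    (Z : Type u) (iZ : Group Z) (hZ : C Z) (ψZ : Multiplicative ℤ ≃* Z) :
    ∀ (n : ℕ) (α : Type u) (_ : (derivedSeries (FreeGroup α) n).Normal),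
      Cardinal.mk (FreeGroup α ⧸ derivedSeries (FreeGroup α) n) ≤ 2 ^ Cardinal.mk X →
      C (FreeGroup α ⧸ derivedSeries (FreeGroup α) n) := by
  intro n
  induction n with
  | zero =>
    intro α _ _
    haveI : Subsingleton (FreeGroup α ⧸ derivedSeries (FreeGroup α) 0) := by
      constructor
      intro x y
      refine QuotientGroup.induction_on x (fun a => QuotientGroup.induction_on y (fun b => ?_))
      refine (QuotientGroup.eq).mpr ?_
      rw [derivedSeries_zero]
      trivial
    exact triv_mem hroot _
  | succ n ih =>
    intro α _ hcard
    set F := FreeGroup α with hF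
    set Q := F ⧸ derivedSeries F (n + 1) with hQ
    haveI : (derivedSeries F (n + 1)).Normal := derivedSeries_normal F (n + 1)
    haveI : (derivedSeries F n).Normal := derivedSeries_normal F n
    set N := derivedSeries Q n with hNdef
    haveI : N.Normal := derivedSeries_normal Q n
    have hNmap : (derivedSeries F n).map (QuotientGroup.mk' (derivedSeries F (n + 1))) = N :=
      map_derivedSeries_eq (QuotientGroup.mk'_surjective _) n
    have hle : derivedSeries F (n + 1) ≤ derivedSeries F n := by
      rw [derivedSeries_succ]
      refine Subgroup.commutator_le.mpr (fun g₁ h₁ g₂ h₂ => ?_)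
      rw [commutatorElement_def]
      exact Subgroup.mul_mem _ (Subgroup.mul_mem _ (Subgroup.mul_mem _ h₁ h₂)
        (Subgroup.inv_mem _ h₁)) (Subgroup.inv_mem _ h₂)
    have equivQ : (Q ⧸ N) ≃* (F ⧸ derivedSeries F n) :=
      (QuotientGroup.quotientMulEquivOfEq hNmap.symm).trans
        (QuotientGroup.quotientQuotientEquivQuotient (derivedSeries F (n + 1))
          (derivedSeries F n) hle)
    have hcardQn : Cardinal.mk (F ⧸ derivedSeries F n) ≤ 2 ^ Cardinal.mk X := by
      have h1 : Cardinal.mk (F ⧸ derivedSeries F n) = Cardinal.mk (Q ⧸ N) :=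
        (Cardinal.mk_congr equivQ.toEquiv).symm
      rw [h1]
      exact (Cardinal.mk_le_of_surjective (QuotientGroup.mk'_surjective N)).trans hcard
    have hCQuotN : C (Q ⧸ N) := hroot.1 _ _ equivQ.symm
      (ih α (derivedSeries_normal F n) hcardQn)
    -- now show C ↥N via the free abelian structure
    set K := ↥(derivedSeries F n) with hK
    let φ : K →* Q := (QuotientGroup.mk' (derivedSeries F (n + 1))).comp
      (derivedSeries F n).subtype
    have hrange : φ.range = N := by
      rw [MonoidHom.range_comp, Subgroup.range_subtype, hNmap]
    have hker : φ.ker = commutator K := by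
      have h1 : Subgroup.map (derivedSeries F n).subtype (commutator K) =
          derivedSeries F (n + 1) := by
        rw [commutator_def, Subgroup.map_commutator, ← MonoidHom.range_eq_map,
          Subgroup.range_subtype, ← derivedSeries_succ]
      have h2 : φ.ker = (derivedSeries F (n + 1)).subgroupOf (derivedSeries F n) := by
        ext x
        rw [MonoidHom.mem_ker, Subgroup.mem_subgroupOf]
        show (QuotientGroup.mk' _) ((derivedSeries F n).subtype x) = 1 ↔ _
        rw [QuotientGroup.mk'_apply, QuotientGroup.eq_one_iff]
        exact Iff.rfl
      rw [h2, ← h1, Subgroup.subgroupOf, Subgroup.comap_map_eq_self_of_injective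
        (Subgroup.subtype_injective _)]
    -- iso between ↥N and the abelianization of the free group K
    set β := IsFreeGroup.Generators K with hβ
    let abE : Abelianization K ≃* Abelianization (FreeGroup β) :=
      MulEquiv.abelianizationCongr (IsFreeGroup.toFreeGroup K)
    let multAdd : Multiplicative (FreeAbelianGroup β) ≃* Abelianization (FreeGroup β) :=
      MulEquiv.multiplicativeAdditive (Abelianization (FreeGroup β))
    let fins : FreeAbelianGroup β ≃+ (β →₀ ℤ) := FreeAbelianGroup.equivFinsupp β
    let e0 : (Abelianization K) ≃* ↥N :=
      ((QuotientGroup.quotientMulEquivOfEq hker.symm).trans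
        (QuotientGroup.quotientKerEquivRange φ)).trans (MulEquiv.subgroupCongr hrange)
    let h0 : ↥N ≃* Multiplicative ((β →₀ ℤ)) :=
      (e0.symm.trans abE).trans ((multAdd.symm).trans (AddEquiv.toMultiplicative fins))
    rcases isEmpty_or_nonempty β with hβe | hβne
    · -- N is trivial
      haveI : Subsingleton (β →₀ ℤ) :=
        ⟨fun f g => Finsupp.ext (fun b => isEmptyElim b)⟩
      haveI : Subsingleton (Multiplicative ((β →₀ ℤ))) := ‹Subsingleton (β →₀ ℤ)›
      haveI : Subsingleton ↥N := h0.toEquiv.subsingleton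
      exact hroot.2.2.2.1 Q N (triv_mem hroot ↥N) hCQuotN
    · -- the index set β embeds into W := X → X
      set W := (X → X) with hW
      have hWC : C W := hroot.2.2.2.2 X X hX hX
      have hβle : Cardinal.mk β ≤ Cardinal.mk W := by
        have h1 : Cardinal.mk β ≤ Cardinal.mk (β →₀ ℤ) :=
          Cardinal.mk_le_of_injective (f := fun b => Finsupp.single b (1 : ℤ))
            (Finsupp.single_left_injective one_ne_zero)
        have h2 : Cardinal.mk (β →₀ ℤ) = Cardinal.mk ↥N :=
          (Cardinal.mk_congr h0.toEquiv).symm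
        have h3 : Cardinal.mk ↥N ≤ Cardinal.mk Q :=
          Cardinal.mk_le_of_injective (Subtype.val_injective)
        have h4 : (2 : Cardinal) ^ Cardinal.mk X ≤ Cardinal.mk W := by
          rw [← Cardinal.power_def X X]
          refine Cardinal.power_le_power_right ?_
          rw [Cardinal.two_le_iff]
          obtain ⟨x, y, hxy⟩ := hnt
          exact ⟨x, y, hxy⟩
        exact (((h1.trans_eq h2).trans h3).trans hcard).trans h4
      obtain ⟨embβ⟩ := (Cardinal.le_def _ _).mp hβle
      let r : W → β := Function.invFun embβ
      have hr : ∀ b : β, r (embβ b) = b := fun b =>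
        Function.leftInverse_invFun embβ.injective b
      -- assemble the embedding of ↥N into W → Z
      let step2 : ↥N →* (β → Multiplicative ℤ) :=
        (MulEquiv.funMultiplicative β ℤ).toMonoidHom.comp
          ((AddMonoidHom.toMultiplicative Finsupp.coeFnAddHom).comp h0.toMonoidHom)
      have hstep2 : Function.Injective step2 := by
        intro a b hab
        apply h0.injective
        have h1 : (AddMonoidHom.toMultiplicative Finsupp.coeFnAddHom) (h0 a) =
            (AddMonoidHom.toMultiplicative Finsupp.coeFnAddHom) (h0 b) :=
          (MulEquiv.funMultiplicative β ℤ).injective hab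
        have h2 : (Finsupp.coeFnAddHom (Multiplicative.toAdd (h0 a)))
            = (Finsupp.coeFnAddHom (Multiplicative.toAdd (h0 b))) :=
          congrArg Multiplicative.toAdd h1
        have h3 : Multiplicative.toAdd (h0 a) = Multiplicative.toAdd (h0 b) :=
          DFunLike.coe_injective h2
        exact Multiplicative.toAdd.injective h3
      let step3 : (β → Multiplicative ℤ) →* (W → Multiplicative ℤ) :=
        MonoidHom.mk' (fun v => v ∘ r) (fun v v' => rfl)
      have hstep3 : Function.Injective step3 := by
        intro v v' hvv
        funext b
        have h' : v (r (embβ b)) = v' (r (embβ b)) := congrFun hvv (embβ b)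
        rwa [hr b] at h'
      let step4 : (W → Multiplicative ℤ) ≃* (W → Z) :=
        MulEquiv.piCongrRight (fun _ => ψZ)
      have hCN : C ↥N := by
        refine embed_mem hroot (hroot.2.2.2.2 Z W hZ hWC)
          (step4.toMonoidHom.comp (step3.comp step2)) ?_
        exact step4.injective.comp (hstep3.comp hstep2)
      exact hroot.2.2.2.1 Q N hCN hCQuotN

end FreeSolvable

/-- Proposition 4.3: let `C` be a root class, `X` a non-trivial `C`-group.
(1) If `C` contains a non-periodic group, then `C` contains every free solvable group
(quotient of a free group by a term of its derived series, which is a normal subgroup) of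
cardinality at most `2 ^ |X|`.
(2) If `C` consists only of periodic groups, then `C` contains every periodic solvable
`𝔓(C)`-group of finite exponent and cardinality at most `2 ^ |X|`. -/
theorem statement10 (C : GroupClass.{u}) (hroot : IsRootClass C)
    (X : Type u) [Group X] (hX : C X) (hnt : Nontrivial X) :
    ((∃ (G : Type u) (_ : Group G), C G ∧ ¬ Monoid.IsTorsion G) →
      ∀ (α : Type u) (n : ℕ) (_ : (derivedSeries (FreeGroup α) n).Normal),
        Cardinal.mk (FreeGroup α ⧸ derivedSeries (FreeGroup α) n) ≤ 2 ^ Cardinal.mk X →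
        C (FreeGroup α ⧸ derivedSeries (FreeGroup α) n)) ∧
    (IsPeriodicClass C →
      ∀ (S : Type u) [Group S], Monoid.IsTorsion S → IsSolvable S →
        (∀ s : S, ∀ p : ℕ, p.Prime → p ∣ orderOf s → p ∈ classPrimes C) →
        (∃ e : ℕ, 0 < e ∧ ∀ s : S, s ^ e = 1) →
        Cardinal.mk S ≤ 2 ^ Cardinal.mk X → C S) := by
  constructor
  · intro hnp α n hN hcard
    obtain ⟨Z, iZ, hZ, ⟨ψZ⟩⟩ := int_mem hroot hnp
    exact freeSolvable_mem hroot X hX hnt Z iZ hZ ψZ n α hN hcard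
  · intro hper S iS _ hsolv hprimes hexp hcard
    obtain ⟨n, hn⟩ := hsolv.solvable
    exact solvable_mem hroot hper X hX hnt n S iS hn hprimes hexp hcard

end Paper
end

section
/- Let 𝒞 be a root class of groups consisting only of periodic groups, and let A be an abelian group. If no quotient group of A contains a p-quasicyclic (Prüfer p-) subgroup for any p ∈ 𝔓(𝒞), then A has finite rank (i.e., A contains no free abelian subgroup of infinite rank; equivalently, the ℚ-vector space A ⊗ ℚ is finite-dimensional). -/
universe u

namespace Paper

/-- `B` contains a `p`-quasicyclic (Prüfer `p`-) subgroup: there is a sequence of elements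
`f 0, f 1, f 2, …` with `f 0 ≠ 1`, `(f 0) ^ p = 1` and `(f (n+1)) ^ p = f n` for all `n`
(such a sequence generates a copy of `ℤ(p^∞)` in an abelian group). -/
def HasQuasicyclicSubgroup (p : ℕ) (B : Type u) [Group B] : Prop :=
  ∃ f : ℕ → B, f 0 ≠ 1 ∧ (f 0) ^ p = 1 ∧ ∀ n : ℕ, (f (n + 1)) ^ p = f n

set_option maxHeartbeats 1000000 in
/-- Proposition 5.1(1): if no quotient of the abelian group `A` contains a
`p`-quasicyclic subgroup for any `p ∈ 𝔓(C)`, then `A` has finite rank, i.e. `A` contains no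
free abelian subgroup of infinite rank. -/
theorem statement11 (C : GroupClass.{u}) (hroot : IsRootClass C) (hper : IsPeriodicClass C)
    (A : Type u) [CommGroup A]
    (h : ∀ (H : Subgroup A), ∀ p ∈ classPrimes C, ¬ HasQuasicyclicSubgroup p (A ⧸ H)) :
    ¬ ∃ φ : Multiplicative (ℕ →₀ ℤ) →* A, Function.Injective φ := by
  rintro ⟨φ, hφ⟩
  -- obtain a prime in 𝔓(C)
  obtain ⟨-, ⟨G, _, hG, hnt⟩, -⟩ := hroot
  obtain ⟨g, hg⟩ := exists_ne (1 : G)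
  have hord : orderOf g ≠ 1 := by simpa [orderOf_eq_one_iff] using hg
  set p := (orderOf g).minFac with hpdef
  have hp : p.Prime := Nat.minFac_prime hord
  have hpmem : p ∈ classPrimes C := ⟨hp, G, ‹Group G›, hG, g, Nat.minFac_dvd _⟩
  have hp0 : (p : ℚ) ≠ 0 := by exact_mod_cast hp.ne_zero
  -- the free abelian generators
  set e : ℕ → Multiplicative (ℕ →₀ ℤ) :=
    fun n => Multiplicative.ofAdd (Finsupp.single n 1) with he
  set S : Set (Multiplicative (ℕ →₀ ℤ)) :=
    {e 0 ^ p} ∪ Set.range (fun n => e (n + 1) ^ p * (e n)⁻¹) with hS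
  set K : Subgroup (Multiplicative (ℕ →₀ ℤ)) := Subgroup.closure S with hK
  set H : Subgroup A := K.map φ with hHdef
  -- homomorphism to ℚ/ℤ killing K but not e 0
  set a : ℕ → ℚ := fun n => (p : ℚ)⁻¹ ^ (n + 1) with ha
  set χ : (ℕ →₀ ℤ) →+ AddCircle (1 : ℚ) :=
    Finsupp.liftAddHom (fun n => zmultiplesHom _ (((a n : ℚ) : AddCircle (1 : ℚ)))) with hχ
  set ψ : Multiplicative (ℕ →₀ ℤ) →* Multiplicative (AddCircle (1 : ℚ)) :=
    AddMonoidHom.toMultiplicative χ with hψ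
  have hχe : ∀ m : ℕ, χ (Finsupp.single m 1) = ((a m : ℚ) : AddCircle (1 : ℚ)) := by
    intro m
    simp [hχ, Finsupp.liftAddHom_apply_single]
  have hker : K ≤ ψ.ker := by
    rw [hK, Subgroup.closure_le]
    intro x hx
    rcases hx with hx | ⟨n, rfl⟩
    · rcases hx with rfl
      simp only [SetLike.mem_coe, MonoidHom.mem_ker]
      have h1 : ψ (e 0 ^ p) = Multiplicative.ofAdd (χ ((p : ℤ) • (Finsupp.single 0 1 : ℕ →₀ ℤ))) := by
        simp [hψ, he, AddMonoidHom.coe_toMultiplicative, ← ofAdd_zsmul]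
      rw [h1]
      have : χ ((p : ℤ) • (Finsupp.single 0 1 : ℕ →₀ ℤ)) = 0 := by
        rw [map_zsmul, hχe]
        have : (p : ℤ) • ((a 0 : ℚ) : AddCircle (1 : ℚ)) = (((p : ℤ) • a 0 : ℚ) : AddCircle (1 : ℚ)) := by
          push_cast
          rw [← QuotientAddGroup.mk_zsmul]
        rw [this]
        have h2 : ((p : ℤ) • a 0 : ℚ) = 1 := by
          simp [ha, zsmul_eq_mul]
          field_simp
        rw [h2]
        exact AddCircle.coe_period 1
      rw [this, ofAdd_zero]
    · simp only [SetLike.mem_coe, MonoidHom.mem_ker]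
      have h1 : ψ (e (n + 1) ^ p * (e n)⁻¹) =
          Multiplicative.ofAdd (χ ((p : ℤ) • (Finsupp.single (n + 1) 1 : ℕ →₀ ℤ) - Finsupp.single n 1)) := by
        simp [hψ, he, AddMonoidHom.coe_toMultiplicative, ← ofAdd_zsmul, ← ofAdd_neg, ← ofAdd_add,
          sub_eq_add_neg]
      rw [h1]
      have : χ ((p : ℤ) • (Finsupp.single (n + 1) 1 : ℕ →₀ ℤ) - Finsupp.single n 1) = 0 := by
        rw [map_sub, map_zsmul, hχe, hχe]
        have h3 : (p : ℤ) • ((a (n + 1) : ℚ) : AddCircle (1 : ℚ)) = (((p : ℤ) • a (n + 1) : ℚ) : AddCircle (1 : ℚ)) := by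
          rw [← QuotientAddGroup.mk_zsmul]
        rw [h3]
        have h4 : ((p : ℤ) • a (n + 1) : ℚ) = a n := by
          simp only [ha, zsmul_eq_mul, Int.cast_natCast]
          rw [pow_succ]
          field_simp
        rw [h4, sub_self]
      rw [this, ofAdd_zero]
  have he0 : e 0 ∉ K := by
    intro hmem
    have : ψ (e 0) = 1 := hker hmem
    have h5 : ψ (e 0) = Multiplicative.ofAdd ((a 0 : AddCircle (1 : ℚ))) := by
      simp [hψ, he, AddMonoidHom.coe_toMultiplicative, hχe]
    rw [h5] at this
    have h6 : ((a 0 : ℚ) : AddCircle (1 : ℚ)) = 0 := by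
      simpa using this
    rw [AddCircle.coe_eq_zero_iff] at h6
    obtain ⟨n, hn⟩ := h6
    have hn' : (n : ℚ) = a 0 := by simpa [zsmul_eq_mul] using hn
    have ha0 : a 0 = (p : ℚ)⁻¹ := by simp [ha]
    have hppos : (0 : ℚ) < (p : ℚ) := by exact_mod_cast hp.pos
    have hpa : (0 : ℚ) < a 0 := by rw [ha0]; positivity
    have hpa1 : a 0 < 1 := by
      rw [ha0]
      rw [inv_lt_one₀ hppos]
      exact_mod_cast hp.one_lt
    rw [← hn'] at hpa hpa1
    have h7 : (0 : ℤ) < n := by exact_mod_cast hpa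
    have h8 : n < 1 := by exact_mod_cast hpa1
    omega
  -- build the Prüfer sequence in A ⧸ H
  refine h H p hpmem ⟨fun n => QuotientGroup.mk (φ (e n)), ?_, ?_, ?_⟩
  · intro hone
    rw [QuotientGroup.eq_one_iff] at hone
    obtain ⟨k, hk, hkeq⟩ := hone
    exact he0 (hφ hkeq ▸ hk)
  · show (QuotientGroup.mk (φ (e 0)) : A ⧸ H) ^ p = 1
    rw [← QuotientGroup.mk_pow, QuotientGroup.eq_one_iff, ← map_pow]
    exact ⟨e 0 ^ p, Subgroup.subset_closure (Or.inl rfl), rfl⟩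
  · intro n
    show (QuotientGroup.mk (φ (e (n + 1))) : A ⧸ H) ^ p = QuotientGroup.mk (φ (e n))
    rw [← QuotientGroup.mk_pow, ← map_pow]
    rw [QuotientGroup.eq]
    have hmem : φ (e (n + 1) ^ p * (e n)⁻¹) ∈ H :=
      ⟨e (n + 1) ^ p * (e n)⁻¹, Subgroup.subset_closure (Or.inr ⟨n, rfl⟩), rfl⟩
    have : (φ (e (n + 1) ^ p))⁻¹ * φ (e n) = (φ (e (n + 1) ^ p * (e n)⁻¹))⁻¹ := by
      simp [mul_comm]
    rw [this]
    exact H.inv_mem hmem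

end Paper
end

section
/- Let 𝒞 be a root class of groups consisting only of periodic groups, and let A be an abelian group. Then A is weakly 𝒞-bounded if and only if no quotient group of A contains a p-quasicyclic (Prüfer p-) subgroup for any p ∈ 𝔓(𝒞). -/
universe u

namespace Paper

local notation "Q1" => AddCircle (1 : ℚ)

lemma coe_zsmul_circle (z : ℤ) (q : ℚ) : ((z • q : ℚ) : Q1) = z • (q : Q1) :=
  map_zsmul (QuotientAddGroup.mk' _) z q

lemma circle_inv_ne_zero {m : ℕ} (hm : 2 ≤ m) : (((m : ℚ)⁻¹ : ℚ) : Q1) ≠ 0 := by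
  intro h0
  rw [AddCircle.coe_eq_zero_iff] at h0
  obtain ⟨z, hz⟩ := h0
  rw [zsmul_one] at hz
  have hm0 : (m : ℚ) ≠ 0 := by positivity
  have h1 : (z : ℚ) * m = 1 := by rw [hz]; field_simp
  have h2 : z * (m : ℤ) = 1 := by exact_mod_cast h1
  have h3 : (m : ℤ) ∣ 1 := Dvd.intro_left z h2
  have h4 : (m : ℤ) ≤ 1 := Int.le_of_dvd one_pos h3
  omega

/-- value of `ofSpanSingleton` at the generator, in the finite-order case -/
lemma ofSpanSingleton_apply_self' {A : Type u} [AddCommGroup A] (a : A) (h : addOrderOf a ≠ 0) :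
    CharacterModule.ofSpanSingleton a ⟨a, Submodule.mem_span_singleton_self a⟩ =
      (((addOrderOf a : ℚ)⁻¹ : ℚ) : Q1) := by
  erw [CharacterModule.ofSpanSingleton, LinearMap.toAddMonoidHom_coe, LinearMap.comp_apply,
    CharacterModule.intSpanEquivQuotAddOrderOf_apply_self,
    Submodule.liftQSpanSingleton_apply, AddMonoidHom.coe_toIntLinearMap]
  rw [if_neg h]
  erw [LinearMap.toSpanSingleton_apply_one]

/-- extension of characters (injectivity of ℚ/ℤ) -/
lemma extend_char {M : Type u} [AddCommGroup M] (N : Submodule ℤ M) (φ : N →+ Q1) :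
    ∃ ψ : M →+ Q1, ∀ (x : M) (hx : x ∈ N), ψ x = φ ⟨x, hx⟩ := by
  obtain ⟨ψ, hψ⟩ := CharacterModule.dual_surjective_of_injective (R := ℤ) N.subtype
    (Submodule.injective_subtype N) φ
  exact ⟨ψ, fun x hx => congrFun (congrArg DFunLike.coe hψ) ⟨x, hx⟩⟩

end Paper

namespace Paper

/-- From a p-power-torsion element of ℚ/ℤ not killed by p^{n+1}, reach 1/p^{n+1}. -/
lemma reach {p : ℕ} (hp : p.Prime) (w : AddCircle (1 : ℚ)) (n : ℕ)
    (htor : ∃ R : ℕ, (p : ℤ) ^ R • w = 0) (hne : (p : ℤ) ^ (n + 1) • w ≠ 0) :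
    ∃ z : ℤ, z • w = ((((p : ℚ) ^ (n + 1))⁻¹ : ℚ) : AddCircle (1 : ℚ)) := by
  set g : AddCircle (1 : ℚ) := ((((p : ℚ) ^ (n + 1))⁻¹ : ℚ) : AddCircle (1 : ℚ)) with hgdef
  have hppos : (0 : ℚ) < (p : ℚ) := by exact_mod_cast hp.pos
  have hpg : (p : ℤ) ^ (n + 1) • g = 0 := by
    rw [hgdef, ← coe_zsmul_circle]
    have : ((p : ℤ) ^ (n + 1) : ℤ) • (((p : ℚ) ^ (n + 1))⁻¹ : ℚ) = (1 : ℚ) := by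
      rw [zsmul_eq_mul]; push_cast; field_simp
    rw [this]; exact AddCircle.coe_period 1
  set r := Nat.find htor with hrdef
  have hrspec : (p : ℤ) ^ r • w = 0 := Nat.find_spec htor
  have hrmin : ∀ i, i < r → (p : ℤ) ^ i • w ≠ 0 := fun i hi => Nat.find_min htor hi
  have hrn : n + 2 ≤ r := by
    by_contra hlt
    push_neg at hlt
    apply hne
    have h1 : r ≤ n + 1 := by omega
    obtain ⟨d, hd⟩ := Nat.exists_eq_add_of_le h1
    rw [hd, pow_add, mul_comm, mul_smul, hrspec, smul_zero]
  set u := (p : ℤ) ^ (r - (n + 1)) • w with hudef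
  have hu1 : (p : ℤ) ^ (n + 1) • u = 0 := by
    rw [hudef, smul_smul, ← pow_add]
    have : n + 1 + (r - (n + 1)) = r := by omega
    rw [this, hrspec]
  have hu2 : (p : ℤ) ^ n • u ≠ 0 := by
    rw [hudef, smul_smul, ← pow_add]
    have : n + (r - (n + 1)) = r - 1 := by omega
    rw [this]
    exact hrmin (r - 1) (by omega)
  obtain ⟨q, hq⟩ : ∃ q : ℚ, (q : AddCircle (1 : ℚ)) = u := Quotient.exists_rep u
  have hz0 : (((p : ℤ) ^ (n + 1) • q : ℚ) : AddCircle (1 : ℚ)) = 0 := by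
    rw [coe_zsmul_circle, hq, hu1]
  rw [AddCircle.coe_eq_zero_iff] at hz0
  obtain ⟨z, hz⟩ := hz0
  rw [zsmul_one] at hz
  -- hz : (z : ℚ) = (p:ℤ)^(n+1) • q
  have hq' : q = (z : ℚ) * ((p : ℚ) ^ (n + 1))⁻¹ := by
    rw [hz, zsmul_eq_mul]
    push_cast
    field_simp
  have hug : u = z • g := by
    rw [← hq, hq', hgdef, ← coe_zsmul_circle, zsmul_eq_mul]
  have hpz : ¬ (p : ℤ) ∣ z := by
    rintro ⟨z', rfl⟩
    apply hu2
    rw [hug, smul_smul]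
    have : (p : ℤ) ^ n * ((p : ℤ) * z') = z' * (p : ℤ) ^ (n + 1) := by ring
    rw [this, mul_smul, hpg, smul_zero]
  have hcop : IsCoprime z ((p : ℤ) ^ (n + 1)) := by
    apply IsCoprime.pow_right
    rw [Int.isCoprime_iff_gcd_eq_one]
    have h1 : Nat.Coprime p z.natAbs := hp.coprime_iff_not_dvd.mpr (fun hd => hpz (Int.natCast_dvd.mpr hd))
    have : Int.gcd z (p : ℤ) = Nat.gcd z.natAbs p := rfl
    rw [this, Nat.gcd_comm]
    exact h1
  obtain ⟨a, b, hab⟩ := hcop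
  refine ⟨a * (p : ℤ) ^ (r - (n + 1)), ?_⟩
  rw [mul_smul, ← hudef, hug, smul_smul]
  have haz : a * z = 1 - b * (p : ℤ) ^ (n + 1) := by linarith
  rw [haz, sub_smul, one_smul, mul_smul, hpg, smul_zero, sub_zero]

end Paper

namespace Paper

lemma step {M : Type u} [AddCommGroup M] {p : ℕ} (hp : p.Prime)
    (h : ∀ j : ℕ, ∃ x : M, (∃ k : ℕ, (p : ℤ) ^ k • x = 0) ∧ (p : ℤ) ^ j • x ≠ 0)
    (E : Submodule ℤ M) (m : ℕ) (hE : ∀ x ∈ E, (p : ℤ) ^ m • x = 0)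
    (φ : E →+ AddCircle (1 : ℚ)) (t : ℕ) :
    ∃ (E' : Submodule ℤ M) (hle : E ≤ E') (φ' : E' →+ AddCircle (1 : ℚ)) (m' : ℕ),
      (∀ x ∈ E', (p : ℤ) ^ m' • x = 0) ∧
      (∀ (x : M) (hx : x ∈ E), φ' ⟨x, hle hx⟩ = φ ⟨x, hx⟩) ∧
      ∃ (c : M) (hc : c ∈ E'), (p : ℤ) ^ t • φ' ⟨c, hc⟩ ≠ 0 := by
  classical
  obtain ⟨c, ⟨k, hk⟩, hcne⟩ := h (m + t)
  have hex : ∃ s : ℕ, (p : ℤ) ^ s • c ∈ E := ⟨k, by rw [hk]; exact E.zero_mem⟩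
  set s := Nat.find hex with hsdef
  have hsE : (p : ℤ) ^ s • c ∈ E := Nat.find_spec hex
  have hkill : (p : ℤ) ^ (m + s) • c = 0 := by
    rw [pow_add, mul_smul]; exact hE _ hsE
  have hst : t + 1 ≤ s := by
    by_contra hlt
    push_neg at hlt
    apply hcne
    have h1 : m + s ≤ m + t := by omega
    obtain ⟨d, hd⟩ := Nat.exists_eq_add_of_le h1
    rw [hd, pow_add, mul_comm, mul_smul, hkill, smul_zero]
  -- the quotient map and the order of c mod E
  have hmem : ∀ (i : ℕ), ((p ^ i : ℕ) : ℤ) • c ∈ E ↔ (p : ℤ) ^ i • c ∈ E := by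
    intro i; rw [Int.natCast_pow]
  have hπzero : ∀ y : M, E.mkQ y = 0 ↔ y ∈ E := fun y => by
    rw [Submodule.mkQ_apply, Submodule.Quotient.mk_eq_zero]
  have hordd : addOrderOf (E.mkQ c) ∣ p ^ s := by
    apply addOrderOf_dvd_of_nsmul_eq_zero
    rw [← map_nsmul, hπzero]
    have : (p ^ s : ℕ) • c = ((p ^ s : ℕ) : ℤ) • c := (natCast_zsmul c (p ^ s)).symm
    rw [this]
    exact (hmem s).mpr hsE
  have hords : addOrderOf (E.mkQ c) = p ^ s := by
    obtain ⟨i, his, hi⟩ := (Nat.dvd_prime_pow hp).mp hordd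
    have hiE : (p : ℤ) ^ i • c ∈ E := by
      rw [← hmem i, natCast_zsmul, ← hπzero, map_nsmul, ← hi,
        addOrderOf_nsmul_eq_zero]
    have : s ≤ i := Nat.find_min' hex hiE
    rw [hi]
    congr 1
    omega
  have hordne : addOrderOf (E.mkQ c) ≠ 0 := by
    rw [hords]; exact pow_ne_zero _ hp.pos.ne'
  -- β : vanishes on E, sends c to 1/p^s
  obtain ⟨γ, hγ⟩ := extend_char (Submodule.span ℤ {E.mkQ c})
    (CharacterModule.ofSpanSingleton (E.mkQ c))
  have hγc : γ (E.mkQ c) = ((((p : ℚ) ^ s)⁻¹ : ℚ) : AddCircle (1 : ℚ)) := by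
    erw [hγ (E.mkQ c) (Submodule.mem_span_singleton_self _),
      ofSpanSingleton_apply_self' _ hordne, hords]
    push_cast
    rfl
  set β : M →+ AddCircle (1 : ℚ) := γ.comp E.mkQ.toAddMonoidHom with hβdef
  have hβc : β c = ((((p : ℚ) ^ s)⁻¹ : ℚ) : AddCircle (1 : ℚ)) := hγc
  have hβE : ∀ x ∈ E, β x = 0 := fun x hx => by
    have : E.mkQ x = 0 := (hπzero x).mpr hx
    simp only [hβdef, AddMonoidHom.comp_apply, LinearMap.toAddMonoidHom_coe, this, map_zero]
  -- α : extends φ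
  obtain ⟨α, hα⟩ := extend_char E φ
  -- choose ψ among α, α + β
  have key : ∃ ψ : M →+ AddCircle (1 : ℚ),
      (∀ (x : M) (hx : x ∈ E), ψ x = φ ⟨x, hx⟩) ∧ (p : ℤ) ^ (s - 1) • ψ c ≠ 0 := by
    by_cases hone : (p : ℤ) ^ (s - 1) • α c ≠ 0
    · exact ⟨α, hα, hone⟩
    · push_neg at hone
      refine ⟨α + β, fun x hx => by
        rw [AddMonoidHom.add_apply, hα x hx, hβE x hx, add_zero], ?_⟩
      rw [AddMonoidHom.add_apply, smul_add, hone, zero_add, hβc, ← coe_zsmul_circle]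
      have hs1 : s = (s - 1) + 1 := by omega
      have hval : ((p : ℤ) ^ (s - 1) : ℤ) • (((p : ℚ) ^ s)⁻¹ : ℚ) = ((p : ℚ))⁻¹ := by
        rw [zsmul_eq_mul]
        push_cast
        rw [hs1, pow_succ]
        have hp0 : (p : ℚ) ≠ 0 := by exact_mod_cast hp.pos.ne'
        field_simp
        simp
      rw [hval]
      exact_mod_cast circle_inv_ne_zero (m := p) hp.two_le
  obtain ⟨ψ, hψE, hψc⟩ := key
  -- assemble
  refine ⟨E ⊔ Submodule.span ℤ {c}, le_sup_left,
    ψ.comp (E ⊔ Submodule.span ℤ {c}).subtype.toAddMonoidHom, m + s, ?_, ?_, c,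
    Submodule.mem_sup_right (Submodule.mem_span_singleton_self c), ?_⟩
  · -- killed by p^(m+s)
    intro x hx
    have hker : E ⊔ Submodule.span ℤ {c} ≤
        LinearMap.ker (((p : ℤ) ^ (m + s)) • (LinearMap.id : M →ₗ[ℤ] M)) := by
      apply sup_le
      · intro y hy
        rw [LinearMap.mem_ker, LinearMap.smul_apply, LinearMap.id_apply, pow_add, mul_comm,
          mul_smul]
        rw [hE y hy, smul_zero]
      · rw [Submodule.span_le, Set.singleton_subset_iff]
        rw [SetLike.mem_coe, LinearMap.mem_ker, LinearMap.smul_apply, LinearMap.id_apply]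
        exact hkill
    have := hker hx
    rwa [LinearMap.mem_ker, LinearMap.smul_apply, LinearMap.id_apply] at this
  · intro x hx
    exact hψE x hx
  · -- p^t • ψ c ≠ 0
    intro h0
    apply hψc
    have hts : s - 1 = t + (s - 1 - t) := by omega
    have : (ψ.comp (E ⊔ Submodule.span ℤ {c}).subtype.toAddMonoidHom)
        ⟨c, Submodule.mem_sup_right (Submodule.mem_span_singleton_self c)⟩ = ψ c := rfl
    rw [this] at h0
    rw [hts, pow_add, mul_comm, mul_smul, h0, smul_zero]

end Paper

namespace Paper

lemma core {M : Type u} [AddCommGroup M] {p : ℕ} (hp : p.Prime)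
    (h : ∀ j : ℕ, ∃ x : M, (∃ k : ℕ, (p : ℤ) ^ k • x = 0) ∧ (p : ℤ) ^ j • x ≠ 0) :
    ∃ ψ : M →+ AddCircle (1 : ℚ), ∀ n : ℕ, ∃ b : M,
      ψ b = ((((p : ℚ) ^ (n + 1))⁻¹ : ℚ) : AddCircle (1 : ℚ)) := by
  classical
  have step' : ∀ (S : Σ' (E : Submodule ℤ M) (_ : E →+ AddCircle (1 : ℚ)) (m : ℕ),
      ∀ x ∈ E, (p : ℤ) ^ m • x = 0) (t : ℕ),
      ∃ S' : Σ' (E : Submodule ℤ M) (_ : E →+ AddCircle (1 : ℚ)) (m : ℕ),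
        ∀ x ∈ E, (p : ℤ) ^ m • x = 0,
      ∃ hle : S.1 ≤ S'.1,
        (∀ (x : M) (hx : x ∈ S.1), S'.2.1 ⟨x, hle hx⟩ = S.2.1 ⟨x, hx⟩) ∧
        ∃ (c : M) (hc : c ∈ S'.1), (p : ℤ) ^ t • S'.2.1 ⟨c, hc⟩ ≠ 0 := by
    intro S t
    obtain ⟨E', hle, φ', m', h1, h2, h3⟩ := step hp h S.1 S.2.2.1 S.2.2.2 S.2.1 t
    exact ⟨⟨E', φ', m', h1⟩, hle, h2, h3⟩
  set T : ℕ → Σ' (E : Submodule ℤ M) (_ : E →+ AddCircle (1 : ℚ)) (m : ℕ),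
      ∀ x ∈ E, (p : ℤ) ^ m • x = 0 :=
    fun n => Nat.rec
      ⟨⊥, 0, 0, by intro x hx; rw [Submodule.mem_bot] at hx; rw [hx, smul_zero]⟩
      (fun n S => Classical.choose (step' S (n + 1))) n with hT
  have spec : ∀ n : ℕ, ∃ hle : (T n).1 ≤ (T (n + 1)).1,
      (∀ (x : M) (hx : x ∈ (T n).1), (T (n + 1)).2.1 ⟨x, hle hx⟩ = (T n).2.1 ⟨x, hx⟩) ∧
      ∃ (c : M) (hc : c ∈ (T (n + 1)).1),
        (p : ℤ) ^ (n + 1) • (T (n + 1)).2.1 ⟨c, hc⟩ ≠ 0 :=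
    fun n => Classical.choose_spec (step' (T n) (n + 1))
  have hmono : ∀ n, (T n).1 ≤ (T (n + 1)).1 := fun n => (spec n).choose
  have hmono' : Monotone (fun n => (T n).1) := monotone_nat_of_le_succ hmono
  have hcompat : ∀ n (x : M) (hx : x ∈ (T n).1),
      (T (n + 1)).2.1 ⟨x, hmono n hx⟩ = (T n).2.1 ⟨x, hx⟩ := by
    intro n x hx
    obtain ⟨hle, hc, -⟩ := spec n
    exact hc x hx
  have hcomp2 : ∀ i j (hij : i ≤ j) (x : M) (hx : x ∈ (T i).1),
      (T j).2.1 ⟨x, hmono' hij hx⟩ = (T i).2.1 ⟨x, hx⟩ := by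
    intro i j hij
    induction j, hij using Nat.le_induction with
    | base => intro x hx; rfl
    | succ j hij ih =>
      intro x hx
      rw [← ih x hx]
      exact hcompat j x (hmono' hij hx)
  set D : Submodule ℤ M := ⨆ n, (T n).1 with hD
  have hmemD : ∀ x : M, x ∈ D ↔ ∃ n, x ∈ (T n).1 := fun x =>
    Submodule.mem_iSup_of_chain ⟨fun n => (T n).1, hmono'⟩ x
  have hsel : ∀ x : D, ∃ n, (x : M) ∈ (T n).1 := fun x => (hmemD x).mp x.2
  set χf : D → AddCircle (1 : ℚ) :=
    fun x => (T (Nat.find (hsel x))).2.1 ⟨(x : M), Nat.find_spec (hsel x)⟩ with hχf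
  have hval : ∀ (x : D) (n : ℕ) (hx : (x : M) ∈ (T n).1), χf x = (T n).2.1 ⟨x, hx⟩ := by
    intro x n hx
    have h1 := hcomp2 (Nat.find (hsel x)) (max (Nat.find (hsel x)) n) (le_max_left _ _)
      x (Nat.find_spec (hsel x))
    have h2 := hcomp2 n (max (Nat.find (hsel x)) n) (le_max_right _ _) x hx
    exact h1.symm.trans h2
  set χ : D →+ AddCircle (1 : ℚ) :=
    { toFun := χf
      map_zero' := by
        rw [hval 0 0 (Submodule.zero_mem _)]
        exact map_zero _
      map_add' := by
        intro x y
        obtain ⟨nx, hnx⟩ := hsel x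
        obtain ⟨ny, hny⟩ := hsel y
        have hx' : (x : M) ∈ (T (max nx ny)).1 := hmono' (le_max_left _ _) hnx
        have hy' : (y : M) ∈ (T (max nx ny)).1 := hmono' (le_max_right _ _) hny
        have hxy : ((x + y : D) : M) ∈ (T (max nx ny)).1 := Submodule.add_mem _ hx' hy'
        show χf (x + y) = χf x + χf y
        rw [hval (x + y) (max nx ny) hxy, hval x (max nx ny) hx', hval y (max nx ny) hy',
          ← map_add]
        rfl } with hχ
  obtain ⟨ψ, hψ⟩ := extend_char D χ
  refine ⟨ψ, fun n => ?_⟩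
  obtain ⟨hle, hcom, c, hc, hne⟩ := spec n
  have hcD : c ∈ D := (hmemD c).mpr ⟨n + 1, hc⟩
  have hwc : ψ c = (T (n + 1)).2.1 ⟨c, hc⟩ := by
    rw [hψ c hcD]
    exact hval ⟨c, hcD⟩ (n + 1) hc
  have htor : ∃ R : ℕ, (p : ℤ) ^ R • ψ c = 0 := by
    refine ⟨(T (n + 1)).2.2.1, ?_⟩
    rw [← map_zsmul, (T (n + 1)).2.2.2 c hc, map_zero]
  have hne' : (p : ℤ) ^ (n + 1) • ψ c ≠ 0 := by
    rw [hwc]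
    exact hne
  obtain ⟨z, hz⟩ := reach hp (ψ c) n htor hne'
  exact ⟨z • c, by rw [map_zsmul, hz]⟩

end Paper

namespace Paper

lemma hasQuasicyclic_of_mulEquiv {X Y : Type u} [Group X] [Group Y] (e : X ≃* Y) {p : ℕ}
    (h : HasQuasicyclicSubgroup p X) : HasQuasicyclicSubgroup p Y := by
  obtain ⟨f, h0, h1, h2⟩ := h
  refine ⟨fun n => e (f n), ?_, ?_, fun n => ?_⟩
  · intro hc
    exact h0 (e.injective (hc.trans (map_one e).symm))
  · show e (f 0) ^ p = 1
    rw [← map_pow, h1, map_one]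
  · show e (f (n + 1)) ^ p = e (f n)
    rw [← map_pow, h2]

lemma coe_nsmul_circle (n : ℕ) (q : ℚ) :
    ((n • q : ℚ) : AddCircle (1 : ℚ)) = n • (q : AddCircle (1 : ℚ)) :=
  map_nsmul (QuotientAddGroup.mk' _) _ _

lemma circle_pow_inv_ne_zero {p : ℕ} (hp : p.Prime) (n : ℕ) :
    ((((p : ℚ) ^ (n + 1))⁻¹ : ℚ) : AddCircle (1 : ℚ)) ≠ 0 := by
  have h2 : 2 ≤ p ^ (n + 1) := le_trans hp.two_le (Nat.le_self_pow (by omega) p)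
  have := circle_inv_ne_zero h2
  convert this using 3
  push_cast
  ring

lemma core_mul {B : Type u} [CommGroup B] {p : ℕ} (hp : p.Prime)
    (hunb : ∀ j : ℕ, ∃ x : B, (∃ k : ℕ, x ^ p ^ k = 1) ∧ x ^ p ^ j ≠ 1) :
    ∃ K : Subgroup B, HasQuasicyclicSubgroup p (B ⧸ K) := by
  have hp0 : (p : ℚ) ≠ 0 := by
    exact_mod_cast hp.pos.ne'
  have hcast : ∀ (y : B) (i : ℕ),
      (p : ℤ) ^ i • Additive.ofMul y = Additive.ofMul (y ^ p ^ i) := by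
    intro y i
    rw [ofMul_pow, ← natCast_zsmul]
    congr 1
  have h : ∀ j : ℕ, ∃ x : Additive B, (∃ k : ℕ, (p : ℤ) ^ k • x = 0) ∧ (p : ℤ) ^ j • x ≠ 0 := by
    intro j
    obtain ⟨x, ⟨k, hk⟩, hj⟩ := hunb j
    refine ⟨Additive.ofMul x, ⟨k, ?_⟩, ?_⟩
    · rw [hcast, hk]; rfl
    · rw [hcast]
      intro hh
      exact hj hh
  obtain ⟨ψ, hψ⟩ := core hp h
  set ψ' : B →* Multiplicative (AddCircle (1 : ℚ)) := AddMonoidHom.toMultiplicativeRight ψ with hψ'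
  refine ⟨ψ'.ker, ?_⟩
  choose b hb using hψ
  have hker : ∀ y : B, (QuotientGroup.mk y : B ⧸ ψ'.ker) = 1 ↔ ψ (Additive.ofMul y) = 0 := by
    intro y
    rw [QuotientGroup.eq_one_iff, MonoidHom.mem_ker]
    exact Iff.rfl
  refine ⟨fun n => QuotientGroup.mk (Additive.toMul (b n)), ?_, ?_, fun n => ?_⟩
  · show (QuotientGroup.mk (Additive.toMul (b 0)) : B ⧸ ψ'.ker) ≠ 1
    intro hh
    rw [hker] at hh
    exact circle_pow_inv_ne_zero hp 0 ((hb 0).symm.trans hh)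
  · show (QuotientGroup.mk (Additive.toMul (b 0)) : B ⧸ ψ'.ker) ^ p = 1
    rw [← QuotientGroup.mk'_apply, ← map_pow, QuotientGroup.mk'_apply, hker, ofMul_pow]
    show ψ (p • b 0) = 0
    rw [map_nsmul, hb 0, ← coe_nsmul_circle]
    have key : p • ((((p : ℚ) ^ (0 + 1))⁻¹ : ℚ)) = (1 : ℚ) := by
      rw [nsmul_eq_mul]
      field_simp
      ring
    rw [key]
    exact AddCircle.coe_period 1
  · show (QuotientGroup.mk (Additive.toMul (b (n + 1))) : B ⧸ ψ'.ker) ^ p =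
        QuotientGroup.mk (Additive.toMul (b n))
    rw [← QuotientGroup.mk'_apply, ← map_pow, QuotientGroup.mk'_apply, QuotientGroup.eq,
      MonoidHom.mem_ker]
    show ψ (Additive.ofMul ((Additive.toMul (b (n + 1)) ^ p)⁻¹ * Additive.toMul (b n))) = 0
    rw [ofMul_mul, ofMul_inv, ofMul_pow]
    show ψ (-(p • b (n + 1)) + b n) = 0
    rw [map_add, map_neg, map_nsmul, hb (n + 1), hb n, ← coe_nsmul_circle]
    have key : p • ((((p : ℚ) ^ (n + 1 + 1))⁻¹ : ℚ)) = (((p : ℚ) ^ (n + 1))⁻¹ : ℚ) := by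
      rw [nsmul_eq_mul]
      rw [show ((p : ℚ) ^ (n + 1 + 1)) = (p : ℚ) ^ (n + 1) * p by ring]
      field_simp
    rw [key, neg_add_cancel]

end Paper


namespace Paper

/-- Proposition 5.1(2): an abelian group `A` is weakly `C`-bounded if and
only if no quotient of `A` contains a `p`-quasicyclic subgroup for any `p ∈ 𝔓(C)`. -/
theorem statement12 (C : GroupClass.{u}) (hroot : IsRootClass C) (hper : IsPeriodicClass C)
    (A : Type u) [CommGroup A] :
    WeaklyBounded (classPrimes C) A ↔
      ∀ (H : Subgroup A), ∀ p ∈ classPrimes C, ¬ HasQuasicyclicSubgroup p (A ⧸ H) := by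
  constructor
  · intro hwb H p hpP hchain
    have hp : p.Prime := hpP.1
    obtain ⟨f, hf0, hf0p, hfs⟩ := hchain
    obtain ⟨e, he, hbound⟩ := hwb H p hpP
    have hpow : ∀ n, f n ^ (p ^ (n + 1)) = 1 := by
      intro n
      induction n with
      | zero => simpa [pow_one] using hf0p
      | succ n ih =>
        have : p ^ (n + 2) = p * p ^ (n + 1) := by ring
        rw [this, pow_mul, hfs n, ih]
    have hbase : ∀ n, f n ^ (p ^ n) = f 0 := by
      intro n
      induction n with
      | zero => simp
      | succ n ih =>
        have : p ^ (n + 1) = p * p ^ n := by ring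
        rw [this, pow_mul, hfs n, ih]
    have he1 : f e ^ e = 1 := hbound (f e) ⟨e + 1, hpow e⟩
    have hfin : orderOf (f e) ∣ p ^ (e + 1) := orderOf_dvd_of_pow_eq_one (hpow e)
    have hdvd : orderOf (f e) ∣ e := orderOf_dvd_of_pow_eq_one he1
    have hnd : ¬ orderOf (f e) ∣ p ^ e := by
      intro hd
      exact hf0 (by rw [← hbase e]; exact orderOf_dvd_iff_pow_eq_one.mp hd)
    obtain ⟨i, hie, hi⟩ := (Nat.dvd_prime_pow hp).mp hfin
    have hieq : i = e + 1 := by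
      by_contra hne2
      have hle : i ≤ e := by omega
      exact hnd (hi ▸ pow_dvd_pow p hle)
    rw [hieq] at hi
    have h1 : p ^ (e + 1) ≤ e := Nat.le_of_dvd he (hi ▸ hdvd)
    have h2 : e < p ^ e := Nat.lt_pow_self (n := e) hp.one_lt
    have h3 : p ^ e ≤ p ^ (e + 1) := Nat.pow_le_pow_right hp.pos (by omega)
    omega
  · intro hq H instH p hpP
    have hp : p.Prime := hpP.1
    by_contra hno
    push_neg at hno
    have hunb : ∀ j : ℕ, ∃ x : A ⧸ H, (∃ k : ℕ, x ^ p ^ k = 1) ∧ x ^ p ^ j ≠ 1 := by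
      intro j
      obtain ⟨x, hx1, hx2⟩ := hno (p ^ j) (pow_pos hp.pos j)
      exact ⟨x, hx1, hx2⟩
    obtain ⟨K, hK⟩ := core_mul hp hunb
    set σ : A →* (A ⧸ H) ⧸ K := (QuotientGroup.mk' K).comp (QuotientGroup.mk' H) with hσdef
    have hσ : Function.Surjective σ :=
      (QuotientGroup.mk'_surjective K).comp (QuotientGroup.mk'_surjective H)
    have e := QuotientGroup.quotientKerEquivOfSurjective σ hσ
    exact hq σ.ker p hpP (hasQuasicyclic_of_mulEquiv e.symm hK)

end Paper
end
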